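/- In the Hecke algebra H of S_r over Z[v,v^{-1}] with q = v², for a composition λ*|*μ of r, the set of elements h ∈ H satisfying T_s h = q h for all simple reflections s ∈ S_{λ*} and T_t h = -h for all simple reflections t ∈ S_{*μ} equals the free module x_λ y_μ H with basis {x_λ y_μ T_d : d ∈ D_{λ|μ}}, where x_λ = Σ_{w ∈ S_{λ*}} T_w, y_μ = Σ_{w ∈ S_{*μ}} (-q)^{-l(w)} T_w, and D_{λ|μ} is the set of minimal right coset representatives of S_{λ*}S_{*μ} in S_r. -/

import Mathlib

def invLen {r : ℕ} (w : Equiv.Perm (Fin r)) : ℕ :=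
  (Finset.univ.filter (fun p : Fin r × Fin r => p.1 < p.2 ∧ w p.2 < w p.1)).card

/-- The index of the block (part) of the composition `c` containing the position `i`
(positions are `0`-based). -/
def blockIdx (c : List ℕ) (i : ℕ) : ℕ :=
  ((List.range c.length).filter (fun j => (c.take (j + 1)).sum ≤ i)).length

/-- The Young subgroup of `S_r` associated to a composition `c` of `r`: permutations
preserving each block of the composition. -/
def youngSubgroup (r : ℕ) (c : List ℕ) : Subgroup (Equiv.Perm (Fin r)) where
  carrier := {w | ∀ i : Fin r, blockIdx c ((w i : Fin r) : ℕ) = blockIdx c (i : ℕ)}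
  one_mem' := fun _ => rfl
  mul_mem' := by
    intro a b ha hb i
    have : (a * b) i = a (b i) := rfl
    rw [this, ha (b i), hb i]
  inv_mem' := by
    intro a ha i
    have h := ha (a⁻¹ i)
    simpa using h.symm

/-- A basic transposition of `S_r`. -/
def isSimple {r : ℕ} (s : Equiv.Perm (Fin r)) : Prop :=
  ∃ (k : ℕ) (hk : k + 1 < r),
    s = Equiv.swap (⟨k, Nat.lt_of_succ_lt hk⟩ : Fin r) (⟨k + 1, hk⟩ : Fin r)

open scoped Classical

/-- `sameBlock c k` says the basic transposition `s_k` is a simple reflection of `S_c`. -/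
def sameBlock (c : List ℕ) (k : ℕ) : Prop := blockIdx c k = blockIdx c (k + 1)

/-- The basic transposition `s_k = (k, k+1)` of `S_r`. -/
def sw (r k : ℕ) (hk : k + 1 < r) : Equiv.Perm (Fin r) :=
  Equiv.swap (⟨k, Nat.lt_of_succ_lt hk⟩ : Fin r) (⟨k + 1, hk⟩ : Fin r)

/-- `λ* = λ ∨ (1^{r-|λ|})`. -/
def padRight (r : ℕ) (lam : List ℕ) : List ℕ := lam ++ List.replicate (r - lam.sum) 1

/-- `*μ = (1^{r-|μ|}) ∨ μ`. -/
def padLeft (r : ℕ) (mu : List ℕ) : List ℕ := List.replicate (r - mu.sum) 1 ++ mu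

/-- The element `x_c = Σ_{w ∈ S_c} T_w` of the Hecke algebra. -/
noncomputable def xElt {r : ℕ} (c : List ℕ) {H : Type*} [Ring H]
    [Algebra (LaurentPolynomial ℤ) H]
    (b : Module.Basis (Equiv.Perm (Fin r)) (LaurentPolynomial ℤ) H) : H :=
  ∑ w ∈ Finset.univ.filter (fun w => w ∈ youngSubgroup r c), b w

/-- The element `y_c = Σ_{w ∈ S_c} (-q)^{-l(w)} T_w` of the Hecke algebra
(`q = v²`, so `(-q)^{-l(w)} = (-1)^{l(w)} v^{-2 l(w)}`). -/
noncomputable def yElt {r : ℕ} (c : List ℕ) {H : Type*} [Ring H]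
    [Algebra (LaurentPolynomial ℤ) H]
    (b : Module.Basis (Equiv.Perm (Fin r)) (LaurentPolynomial ℤ) H) : H :=
  ∑ w ∈ Finset.univ.filter (fun w => w ∈ youngSubgroup r c),
    ((-1 : LaurentPolynomial ℤ) ^ invLen w *
      LaurentPolynomial.T (-(2 * (invLen w : ℤ)))) • b w

theorem Equiv.Perm.apply_inv_self {α : Type*} (f : Equiv.Perm α) (x : α) : f (f⁻¹ x) = x :=
  f.apply_symm_apply x

theorem Equiv.Perm.inv_apply_self {α : Type*} (f : Equiv.Perm α) (x : α) : f⁻¹ (f x) = x :=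
  f.symm_apply_apply x

namespace Stmt10Aux
open Finset Equiv

variable {r : ℕ}

/-- Filtered inversion count. -/
noncomputable def invP (P : Fin r × Fin r → Prop) (w : Equiv.Perm (Fin r)) : ℕ :=
  (Finset.univ.filter (fun p : Fin r × Fin r => P p ∧ p.1 < p.2 ∧ w p.2 < w p.1)).card

lemma invLen_eq_invP (w : Equiv.Perm (Fin r)) : invLen w = invP (fun _ => True) w := by
  unfold invLen invP
  congr 1
  ext p
  simp

/-- `A k hk = ⟨k⟩`. -/
def Ak (r k : ℕ) (hk : k + 1 < r) : Fin r := ⟨k, Nat.lt_of_succ_lt hk⟩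
def Bk (r k : ℕ) (hk : k + 1 < r) : Fin r := ⟨k + 1, hk⟩

lemma sw_eq_swap (r k : ℕ) (hk : k + 1 < r) : sw r k hk = Equiv.swap (Ak r k hk) (Bk r k hk) := rfl

lemma Ak_lt_Bk (r k : ℕ) (hk : k + 1 < r) : Ak r k hk < Bk r k hk := by
  simp [Ak, Bk, Fin.lt_def]

lemma sw_apply_lt {k : ℕ} (hk : k + 1 < r) {x y : Fin r} (hxy : x < y)
    (hne : ¬(x = Ak r k hk ∧ y = Bk r k hk)) : sw r k hk x < sw r k hk y := by
  rw [sw_eq_swap]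
  rcases eq_or_ne x (Ak r k hk) with hx | hx
  · subst hx
    have hy : y ≠ Bk r k hk := fun h => hne ⟨rfl, h⟩
    have hy' : y ≠ Ak r k hk := ne_of_gt hxy
    rw [Equiv.swap_apply_left, Equiv.swap_apply_of_ne_of_ne hy' hy]
    rcases lt_or_ge (Bk r k hk) y with h | h
    · exact h
    · exfalso
      have : (y : ℕ) ≤ k + 1 := h
      have : (k : ℕ) < y := hxy
      apply hy
      apply Fin.ext; simp [Bk]; omega
  · rcases eq_or_ne x (Bk r k hk) with hx2 | hx2
    · subst hx2
      have hy1 : y ≠ Ak r k hk := by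
        intro h; subst h; exact absurd hxy (not_lt.2 (le_of_lt (Ak_lt_Bk r k hk)))
      have hy2 : y ≠ Bk r k hk := ne_of_gt hxy
      rw [Equiv.swap_apply_right, Equiv.swap_apply_of_ne_of_ne hy1 hy2]
      exact lt_trans (Ak_lt_Bk r k hk) hxy
    · rw [Equiv.swap_apply_of_ne_of_ne hx hx2]
      rcases eq_or_ne y (Ak r k hk) with hy | hy
      · subst hy
        rw [Equiv.swap_apply_left]
        exact lt_trans hxy (Ak_lt_Bk r k hk)
      · rcases eq_or_ne y (Bk r k hk) with hy2 | hy2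
        · subst hy2
          rw [Equiv.swap_apply_right]
          rcases lt_trichotomy x (Ak r k hk) with h | h | h
          · exact h
          · exact absurd h hx
          · exfalso
            have h1 : (k : ℕ) < x := h
            have h2 : (x : ℕ) < k + 1 := hxy
            omega
        · rw [Equiv.swap_apply_of_ne_of_ne hy hy2]; exact hxy

end Stmt10Aux
namespace Stmt10Aux
open Finset Equiv

variable {r : ℕ}

lemma invP_swap_ascent (P : Fin r × Fin r → Prop) {k : ℕ} (hk : k + 1 < r)
    (w : Equiv.Perm (Fin r)) (hasc : w⁻¹ (Ak r k hk) < w⁻¹ (Bk r k hk)) :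
    invP P (sw r k hk * w) = invP P w + (if P (w⁻¹ (Ak r k hk), w⁻¹ (Bk r k hk)) then 1 else 0) := by
  classical
  set A := Ak r k hk
  set B := Bk r k hk
  set i0 := w⁻¹ A
  set j0 := w⁻¹ B
  have hwi0 : w i0 = A := Equiv.Perm.apply_inv_self w A
  have hwj0 : w j0 = B := Equiv.Perm.apply_inv_self w B
  have hAB : A < B := Ak_lt_Bk r k hk
  have hset : (Finset.univ.filter (fun p : Fin r × Fin r =>
        P p ∧ p.1 < p.2 ∧ (sw r k hk * w) p.2 < (sw r k hk * w) p.1)) =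
      (if P (i0, j0) then insert (i0, j0) (Finset.univ.filter (fun p : Fin r × Fin r =>
        P p ∧ p.1 < p.2 ∧ w p.2 < w p.1)) else (Finset.univ.filter (fun p : Fin r × Fin r =>
        P p ∧ p.1 < p.2 ∧ w p.2 < w p.1))) := by
    ext p
    have hmul : ∀ x : Fin r, (sw r k hk * w) x = sw r k hk (w x) := fun x => rfl
    constructor
    · intro hp
      simp only [Finset.mem_filter, Finset.mem_univ, true_and, hmul] at hp
      obtain ⟨hP, h12, hinv⟩ := hp
      by_cases hcase : w p.1 = A ∧ w p.2 = B
      · have hp1 : p.1 = i0 := w.injective (hcase.1.trans hwi0.symm)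
        have hp2 : p.2 = j0 := w.injective (hcase.2.trans hwj0.symm)
        have hpp : p = (i0, j0) := Prod.ext hp1 hp2
        rw [hpp] at hP
        simp [hpp, hP]
      · have hne : w p.2 ≠ w p.1 := fun h => absurd (w.injective h) (ne_of_gt h12)
        have hwlt : w p.2 < w p.1 := by
          rcases lt_or_gt_of_ne hne with h | h
          · exact h
          · exact absurd hinv (not_lt.2 (le_of_lt (sw_apply_lt hk h hcase)))
        have : p ∈ Finset.univ.filter (fun p : Fin r × Fin r =>
            P p ∧ p.1 < p.2 ∧ w p.2 < w p.1) := by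
          simp only [Finset.mem_filter, Finset.mem_univ, true_and]
          exact ⟨hP, h12, hwlt⟩
        split_ifs <;> simp [this]
    · intro hp
      have hmem : p = (i0, j0) ∧ P (i0, j0) ∨ p ∈ Finset.univ.filter (fun p : Fin r × Fin r =>
          P p ∧ p.1 < p.2 ∧ w p.2 < w p.1) := by
        split_ifs at hp with hPc
        · rcases Finset.mem_insert.1 hp with h | h
          · exact Or.inl ⟨h, hPc⟩
          · exact Or.inr h
        · exact Or.inr hp
      simp only [Finset.mem_filter, Finset.mem_univ, true_and, hmul]
      rcases hmem with ⟨hpp, hP⟩ | hmem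
      · subst hpp
        refine ⟨hP, hasc, ?_⟩
        simp only [hwi0, hwj0, sw_eq_swap]
        rw [Equiv.swap_apply_left, Equiv.swap_apply_right]
        exact hAB
      · simp only [Finset.mem_filter, Finset.mem_univ, true_and] at hmem
        obtain ⟨hP, h12, hwlt⟩ := hmem
        refine ⟨hP, h12, ?_⟩
        apply sw_apply_lt hk hwlt
        rintro ⟨h2, h1⟩
        have hp2 : p.2 = i0 := w.injective (h2.trans hwi0.symm)
        have hp1 : p.1 = j0 := w.injective (h1.trans hwj0.symm)
        rw [hp1, hp2] at h12
        exact absurd hasc (not_lt.2 (le_of_lt h12))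
  unfold invP
  rw [hset]
  split_ifs with hPc
  · rw [Finset.card_insert_of_notMem]
    simp only [Finset.mem_filter, Finset.mem_univ, true_and, not_and]
    intro _ _
    simp only [hwi0, hwj0]
    exact not_lt.2 (le_of_lt hAB)
  · simp

end Stmt10Aux
namespace Stmt10Aux
open Finset Equiv

variable {r : ℕ}

lemma sw_mul_self (r k : ℕ) (hk : k + 1 < r) : sw r k hk * sw r k hk = 1 :=
  Equiv.swap_mul_self _ _

lemma sw_mul_sw_mul (k : ℕ) (hk : k + 1 < r) (w : Equiv.Perm (Fin r)) :
    sw r k hk * (sw r k hk * w) = w := by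
  rw [← mul_assoc, sw_mul_self, one_mul]

lemma inv_sw_mul (k : ℕ) (hk : k + 1 < r) (w : Equiv.Perm (Fin r)) (x : Fin r) :
    (sw r k hk * w)⁻¹ x = w⁻¹ (sw r k hk x) := by
  rw [mul_inv_rev]
  have : (sw r k hk)⁻¹ = sw r k hk := by
    rw [sw_eq_swap]; exact Equiv.swap_inv _ _
  simp [this]

lemma sw_apply_Ak (k : ℕ) (hk : k + 1 < r) : sw r k hk (Ak r k hk) = Bk r k hk := by
  rw [sw_eq_swap]; exact Equiv.swap_apply_left _ _

lemma sw_apply_Bk (k : ℕ) (hk : k + 1 < r) : sw r k hk (Bk r k hk) = Ak r k hk := by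
  rw [sw_eq_swap]; exact Equiv.swap_apply_right _ _

lemma invLen_swap_ascent {k : ℕ} (hk : k + 1 < r) (w : Equiv.Perm (Fin r))
    (hasc : w⁻¹ (Ak r k hk) < w⁻¹ (Bk r k hk)) :
    invLen (sw r k hk * w) = invLen w + 1 := by
  rw [invLen_eq_invP, invLen_eq_invP, invP_swap_ascent _ hk w hasc]
  simp

lemma invLen_swap_descent {k : ℕ} (hk : k + 1 < r) (w : Equiv.Perm (Fin r))
    (hdesc : w⁻¹ (Bk r k hk) < w⁻¹ (Ak r k hk)) :
    invLen w = invLen (sw r k hk * w) + 1 := by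
  have h1 : (sw r k hk * w)⁻¹ (Ak r k hk) < (sw r k hk * w)⁻¹ (Bk r k hk) := by
    rw [inv_sw_mul, inv_sw_mul, sw_apply_Ak, sw_apply_Bk]
    exact hdesc
  have := invLen_swap_ascent hk (sw r k hk * w) h1
  rwa [sw_mul_sw_mul] at this

lemma asc_iff {k : ℕ} (hk : k + 1 < r) (w : Equiv.Perm (Fin r)) :
    invLen (sw r k hk * w) = invLen w + 1 ↔ w⁻¹ (Ak r k hk) < w⁻¹ (Bk r k hk) := by
  constructor
  · intro h
    rcases lt_trichotomy (w⁻¹ (Ak r k hk)) (w⁻¹ (Bk r k hk)) with hc | hc | hc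
    · exact hc
    · exfalso
      have : Ak r k hk = Bk r k hk := by
        have := congrArg w hc
        simpa [Equiv.Perm.apply_inv_self] using this
      have hAB := Ak_lt_Bk r k hk
      rw [this] at hAB; exact lt_irrefl _ hAB
    · exfalso
      have := invLen_swap_descent hk w hc
      omega
  · exact invLen_swap_ascent hk w

lemma not_asc_iff {k : ℕ} (hk : k + 1 < r) (w : Equiv.Perm (Fin r)) :
    ¬(invLen (sw r k hk * w) = invLen w + 1) ↔ invLen w = invLen (sw r k hk * w) + 1 := by
  constructor
  · intro h
    rcases lt_trichotomy (w⁻¹ (Ak r k hk)) (w⁻¹ (Bk r k hk)) with hc | hc | hc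
    · exact absurd (invLen_swap_ascent hk w hc) h
    · exfalso
      have : Ak r k hk = Bk r k hk := by
        have := congrArg w hc
        simpa [Equiv.Perm.apply_inv_self] using this
      have hAB := Ak_lt_Bk r k hk
      rw [this] at hAB; exact lt_irrefl _ hAB
    · exact invLen_swap_descent hk w hc
  · intro h; omega

lemma asc_flip {k : ℕ} (hk : k + 1 < r) (w : Equiv.Perm (Fin r))
    (h : invLen (sw r k hk * w) = invLen w + 1) :
    ¬(invLen (sw r k hk * (sw r k hk * w)) = invLen (sw r k hk * w) + 1) := by
  rw [sw_mul_sw_mul]; omega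

lemma desc_flip {k : ℕ} (hk : k + 1 < r) (w : Equiv.Perm (Fin r))
    (h : ¬(invLen (sw r k hk * w) = invLen w + 1)) :
    invLen (sw r k hk * (sw r k hk * w)) = invLen (sw r k hk * w) + 1 := by
  rw [not_asc_iff] at h
  rw [sw_mul_sw_mul]; omega

/-- strict monotone permutations are the identity. -/
lemma perm_eq_one_of_strictMono (w : Equiv.Perm (Fin r)) (h : StrictMono (⇑w)) : w = 1 := by
  have hle : ∀ m : ℕ, ∀ i : Fin r, (i : ℕ) = m → (i : ℕ) ≤ (w i : ℕ) := by
    intro m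
    induction m with
    | zero => intro i hi; omega
    | succ n ih =>
      intro i hi
      have hn : n < r := by omega
      have hlt : (⟨n, hn⟩ : Fin r) < i := by simp [Fin.lt_def]; omega
      have h1 := h hlt
      have h2 : n ≤ ((w ⟨n, hn⟩ : Fin r) : ℕ) := ih ⟨n, hn⟩ rfl
      simp only [Fin.lt_def] at h1
      omega
  have hinvmono : StrictMono (⇑w⁻¹) := by
    intro x y hxy
    rcases lt_trichotomy (w⁻¹ x) (w⁻¹ y) with hc | hc | hc
    · exact hc
    · exfalso
      have : x = y := by
        have := congrArg w hc; simpa [Equiv.Perm.apply_inv_self] using this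
      rw [this] at hxy; exact lt_irrefl _ hxy
    · exfalso
      have := h hc
      rw [Equiv.Perm.apply_inv_self, Equiv.Perm.apply_inv_self] at this
      exact absurd hxy (not_lt.2 (le_of_lt this))
  have hle' : ∀ m : ℕ, ∀ i : Fin r, (i : ℕ) = m → (i : ℕ) ≤ (w⁻¹ i : ℕ) := by
    intro m
    induction m with
    | zero => intro i hi; omega
    | succ n ih =>
      intro i hi
      have hn : n < r := by omega
      have hlt : (⟨n, hn⟩ : Fin r) < i := by simp [Fin.lt_def]; omega
      have h1 := hinvmono hlt
      have h2 : n ≤ ((w⁻¹ ⟨n, hn⟩ : Fin r) : ℕ) := ih ⟨n, hn⟩ rfl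
      simp only [Fin.lt_def] at h1
      omega
  apply Equiv.ext
  intro i
  have h1 : (i : ℕ) ≤ (w i : ℕ) := hle _ i rfl
  have h2 : (w i : ℕ) ≤ (w⁻¹ (w i) : ℕ) := by
    have := hle' (w i : ℕ) (w i) rfl
    exact this
  rw [Equiv.Perm.inv_apply_self] at h2
  simp only [Equiv.Perm.coe_one, id_eq]
  apply Fin.ext
  omega

lemma invLen_one : invLen (1 : Equiv.Perm (Fin r)) = 0 := by
  unfold invLen
  rw [Finset.card_eq_zero]
  ext p
  simp only [Finset.mem_filter, Finset.mem_univ, true_and, Finset.notMem_empty, iff_false]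
  rintro ⟨h1, h2⟩
  simp only [Equiv.Perm.coe_one, id_eq] at h2
  exact absurd h1 (not_lt.2 (le_of_lt h2))

lemma eq_one_of_invLen_zero (w : Equiv.Perm (Fin r)) (h : invLen w = 0) : w = 1 := by
  apply perm_eq_one_of_strictMono
  intro x y hxy
  unfold invLen at h
  rw [Finset.card_eq_zero] at h
  rcases lt_trichotomy (w x) (w y) with hc | hc | hc
  · exact hc
  · exact absurd (w.injective hc) (ne_of_lt hxy)
  · exfalso
    have : (x, y) ∈ Finset.univ.filter (fun p : Fin r × Fin r => p.1 < p.2 ∧ w p.2 < w p.1) := by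
      simp only [Finset.mem_filter, Finset.mem_univ, true_and]
      exact ⟨hxy, hc⟩
    rw [h] at this
    exact absurd this (Finset.notMem_empty _)

/-- adjacent-increasing implies strict mono -/
lemma strictMono_of_adjacent (f : Fin r → Fin r)
    (hadj : ∀ k (hk : k + 1 < r), f ⟨k, Nat.lt_of_succ_lt hk⟩ < f ⟨k + 1, hk⟩) :
    StrictMono f := by
  have key : ∀ m : ℕ, ∀ i j : Fin r, (j : ℕ) = (i : ℕ) + m + 1 → f i < f j := by
    intro m
    induction m with
    | zero =>
      intro i j hj
      have hk : (i : ℕ) + 1 < r := by have := j.isLt; omega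
      have hi : i = ⟨(i : ℕ), Nat.lt_of_succ_lt hk⟩ := by apply Fin.ext; rfl
      have hjj : j = ⟨(i : ℕ) + 1, hk⟩ := by apply Fin.ext; simpa using hj
      rw [hi, hjj]
      exact hadj _ hk
    | succ n ih =>
      intro i j hj
      have hk : (i : ℕ) + n + 1 < r := by have := j.isLt; omega
      have h1 : f i < f ⟨(i : ℕ) + n + 1, hk⟩ := ih i _ (by simp)
      have hk2 : ((i : ℕ) + n) + 1 < r := hk
      have h2 : f ⟨(i : ℕ) + n, Nat.lt_of_succ_lt hk2⟩ < f ⟨(i : ℕ) + n + 1, hk⟩ := hadj _ hk2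
      have hk3 : ((i : ℕ) + n + 1) + 1 < r := by have := j.isLt; omega
      have hjj : j = ⟨(i : ℕ) + n + 1 + 1, hk3⟩ := by apply Fin.ext; simp; omega
      have h3 : f ⟨(i:ℕ) + n + 1, hk⟩ < f j := by rw [hjj]; exact hadj _ hk3
      exact lt_trans h1 h3
  intro x y hxy
  have : (y : ℕ) = (x : ℕ) + ((y : ℕ) - (x : ℕ) - 1) + 1 := by
    have := Fin.lt_def.1 hxy; omega
  exact key _ x y this

/-- existence of a descent -/
lemma exists_descent (w : Equiv.Perm (Fin r)) (hw : w ≠ 1) :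
    ∃ (k : ℕ) (hk : k + 1 < r), w⁻¹ (Bk r k hk) < w⁻¹ (Ak r k hk) := by
  by_contra hc
  push_neg at hc
  apply hw
  have : StrictMono (⇑w⁻¹) := by
    apply strictMono_of_adjacent
    intro k hk
    have h := hc k hk
    rcases lt_trichotomy (w⁻¹ (Ak r k hk)) (w⁻¹ (Bk r k hk)) with h1 | h1 | h1
    · exact h1
    · exfalso
      have : Ak r k hk = Bk r k hk := by
        have := congrArg w h1; simpa [Equiv.Perm.apply_inv_self] using this
      have hAB := Ak_lt_Bk r k hk
      rw [this] at hAB; exact lt_irrefl _ hAB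
    · exact absurd h1 (not_lt.2 h)
  have := perm_eq_one_of_strictMono w⁻¹ this
  have := congrArg (·⁻¹) this
  simpa using this

end Stmt10Aux
namespace Stmt10Aux
open Finset Equiv

variable {r : ℕ}

lemma invLen_mul_le (a c : Equiv.Perm (Fin r)) : invLen (a * c) ≤ invLen a + invLen c := by
  classical
  unfold invLen
  set S := Finset.univ.filter (fun p : Fin r × Fin r => p.1 < p.2 ∧ (a * c) p.2 < (a * c) p.1)
  set Sc := Finset.univ.filter (fun p : Fin r × Fin r => p.1 < p.2 ∧ c p.2 < c p.1)
  set Sa := Finset.univ.filter (fun p : Fin r × Fin r => p.1 < p.2 ∧ a p.2 < a p.1)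
  have hcard : (S ∩ Sc).card + (S \ Sc).card = S.card := Finset.card_inter_add_card_sdiff S Sc
  have h1 : (S ∩ Sc).card ≤ Sc.card := Finset.card_le_card (Finset.inter_subset_right)
  have h2 : (S \ Sc).card ≤ Sa.card := by
    apply Finset.card_le_card_of_injOn (fun p => (c p.1, c p.2))
    · intro p hp
      simp only [Finset.mem_coe, S, Sc, Finset.mem_sdiff, Finset.mem_filter, Finset.mem_univ, true_and,
        not_and] at hp
      obtain ⟨⟨h12, hinv⟩, hnc⟩ := hp
      have hne : c p.1 ≠ c p.2 := fun h => absurd (c.injective h) (ne_of_lt h12)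
      have hc12 : c p.1 < c p.2 := by
        rcases lt_or_gt_of_ne hne with h | h
        · exact h
        · exact absurd h (hnc h12)
      simp only [Finset.mem_coe, Sa, Finset.mem_filter, Finset.mem_univ, true_and]
      exact ⟨hc12, hinv⟩
    · intro p _ p' _ h
      simp only [Prod.mk.injEq] at h
      exact Prod.ext (c.injective h.1) (c.injective h.2)
  omega

end Stmt10Aux
namespace Stmt10Aux
open Finset

lemma blockIdx_mono (c : List ℕ) {i i' : ℕ} (h : i ≤ i') : blockIdx c i ≤ blockIdx c i' := by
  unfold blockIdx
  apply List.Sublist.length_le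
  apply List.monotone_filter_right
  intro a ha
  simp only [decide_eq_true_eq] at ha ⊢
  omega

lemma blockIdx_append (c d : List ℕ) (i : ℕ) :
    blockIdx (c ++ d) i =
      if i < c.sum then blockIdx c i else c.length + blockIdx d (i - c.sum) := by
  unfold blockIdx
  rw [List.length_append, List.range_add, List.filter_append, List.length_append,
    List.filter_map, List.length_map]
  have h1 : ∀ j ∈ List.range c.length,
      (decide (((c ++ d).take (j + 1)).sum ≤ i)) = decide ((c.take (j + 1)).sum ≤ i) := by
    intro j hj
    rw [List.mem_range] at hj
    rw [List.take_append_of_le_length (by omega)]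
  have h2 : ∀ t : ℕ, ((c ++ d).take (c.length + t + 1)).sum = c.sum + (d.take (t + 1)).sum := by
    intro t
    have h3 : c.length + t + 1 = c.length + (t + 1) := by omega
    rw [h3, List.take_append, List.sum_append]
    rw [List.take_of_length_le (by omega), Nat.add_sub_cancel_left]
  rw [List.filter_congr h1]
  split_ifs with hlt
  · have hnil : (List.filter ((fun j => decide (((c ++ d).take (j + 1)).sum ≤ i)) ∘
        fun x => c.length + x) (List.range d.length)) = [] := by
      rw [List.filter_eq_nil_iff]
      intro t _
      simp only [Function.comp_apply, h2, decide_eq_true_eq]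
      omega
    rw [hnil]
    simp
  · have hall : (List.filter (fun j => decide ((c.take (j + 1)).sum ≤ i)) (List.range c.length))
        = List.range c.length := by
      rw [List.filter_eq_self]
      intro j hj
      rw [List.mem_range] at hj
      simp only [decide_eq_true_eq]
      have : (c.take (j + 1)).sum ≤ c.sum := by
        conv_rhs => rw [← List.take_append_drop (j + 1) c]
        rw [List.sum_append]; omega
      omega
    rw [hall, List.length_range]
    congr 1
    congr 1
    apply List.filter_congr
    intro t _
    simp only [Function.comp_apply, h2]
    rw [decide_eq_decide]
    omega

lemma blockIdx_replicate (n i : ℕ) : blockIdx (List.replicate n 1) i = min i n := by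
  induction n generalizing i with
  | zero => simp [blockIdx]
  | succ m ih =>
    have h : List.replicate (m + 1) 1 = [1] ++ List.replicate m 1 := by
      simp [List.replicate_succ]
    rw [h, blockIdx_append]
    have h1 : blockIdx [1] i = if i < 1 then 0 else 1 := by
      unfold blockIdx
      have hr1 : List.range 1 = [0] := rfl
      simp only [List.length_singleton, hr1]
      split_ifs with h0
      · simp [List.filter, show ¬(1 ≤ i) by omega]
      · simp [List.filter, show (1 ≤ i) by omega]
    simp only [List.sum_singleton, List.length_singleton]
    split_ifs with h0
    · rw [h1]; simp [show i = 0 by omega]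
    · rw [ih]; omega

end Stmt10Aux
namespace Stmt10Aux
open Finset

lemma blockIdx_lt_length (c : List ℕ) {i : ℕ} (h : i < c.sum) : blockIdx c i < c.length := by
  unfold blockIdx
  have hle := List.length_filter_le (fun j => decide ((c.take (j + 1)).sum ≤ i)) (List.range c.length)
  rw [List.length_range] at hle
  rcases lt_or_eq_of_le hle with h1 | h1
  · exact h1
  · exfalso
    have hsub := List.monotone_filter_right (l := List.range c.length)
      (p := fun j => decide ((c.take (j + 1)).sum ≤ i)) (q := fun _ => true) (by simp)
    simp only [List.filter_true] at hsub
    have heq : List.filter (fun j => decide ((c.take (j + 1)).sum ≤ i)) (List.range c.length)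
        = List.range c.length := List.Sublist.eq_of_length hsub (by rw [h1, List.length_range])
    have hpos : 0 < c.length := by
      rcases Nat.eq_zero_or_pos c.length with h0 | h0
      · rw [List.length_eq_zero_iff] at h0; subst h0; simp at h
      · exact h0
    have hmem : c.length - 1 ∈ List.range c.length := by rw [List.mem_range]; omega
    rw [← heq, List.mem_filter] at hmem
    have := hmem.2
    simp only [decide_eq_true_eq] at this
    have htake : c.take (c.length - 1 + 1) = c := by
      apply List.take_of_length_le; omega
    rw [htake] at this
    omega

section Facts
variable {r : ℕ} (lam mu : List ℕ)

-- padRight values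
lemma padRight_lt {i : ℕ} (h : i < lam.sum) :
    blockIdx (padRight r lam) i = blockIdx lam i := by
  unfold padRight
  rw [blockIdx_append, if_pos h]

lemma padRight_ge {i : ℕ} (h1 : lam.sum ≤ i) (h2 : i < r) :
    blockIdx (padRight r lam) i = lam.length + (i - lam.sum) := by
  unfold padRight
  rw [blockIdx_append, if_neg (by omega), blockIdx_replicate]
  omega

lemma sum_replicate_one (n : ℕ) : (List.replicate n 1).sum = n := by
  rw [List.sum_replicate]; simp

lemma padLeft_lt {i : ℕ} (h : i < r - mu.sum) :
    blockIdx (padLeft r mu) i = i := by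
  unfold padLeft
  rw [blockIdx_append, if_pos (by rw [sum_replicate_one]; omega), blockIdx_replicate]
  omega

lemma padLeft_ge {i : ℕ} (h : r - mu.sum ≤ i) :
    blockIdx (padLeft r mu) i = (r - mu.sum) + blockIdx mu (i - (r - mu.sum)) := by
  unfold padLeft
  rw [blockIdx_append, if_neg (by rw [sum_replicate_one]; omega), sum_replicate_one,
    List.length_replicate]

lemma concat_lt {i : ℕ} (h : i < lam.sum) :
    blockIdx (lam ++ mu) i = blockIdx lam i := by
  rw [blockIdx_append, if_pos h]

lemma concat_ge {i : ℕ} (h : lam.sum ≤ i) :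
    blockIdx (lam ++ mu) i = lam.length + blockIdx mu (i - lam.sum) := by
  rw [blockIdx_append, if_neg (by omega)]

end Facts
end Stmt10Aux
namespace Stmt10Aux
set_option linter.unusedSectionVars false
set_option linter.unusedVariables false
open Finset

variable {r : ℕ}

lemma mem_young {c : List ℕ} {a : Equiv.Perm (Fin r)} :
    a ∈ youngSubgroup r c ↔ ∀ i : Fin r, blockIdx c ((a i : Fin r) : ℕ) = blockIdx c (i : ℕ) :=
  Iff.rfl

lemma sw_mem_young {c : List ℕ} {k : ℕ} (hk : k + 1 < r) (hsb : sameBlock c k) :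
    sw r k hk ∈ youngSubgroup r c := by
  rw [mem_young]
  intro i
  rcases eq_or_ne i (Ak r k hk) with h | h
  · subst h; rw [sw_apply_Ak]
    exact hsb.symm
  · rcases eq_or_ne i (Bk r k hk) with h2 | h2
    · subst h2; rw [sw_apply_Bk]
      exact hsb
    · rw [sw_eq_swap, Equiv.swap_apply_of_ne_of_ne h h2]

lemma exists_descent_young {c : List ℕ} {a : Equiv.Perm (Fin r)}
    (ha : a ∈ youngSubgroup r c) (hne : a ≠ 1) :
    ∃ (k : ℕ) (hk : k + 1 < r), sameBlock c k ∧ a⁻¹ (Bk r k hk) < a⁻¹ (Ak r k hk) := by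
  obtain ⟨k, hk, hdesc⟩ := exists_descent a hne
  refine ⟨k, hk, ?_, hdesc⟩
  have hainv : a⁻¹ ∈ youngSubgroup r c := inv_mem ha
  rw [mem_young] at hainv
  have h1 : blockIdx c ((a⁻¹ (Bk r k hk) : Fin r) : ℕ) = blockIdx c (k + 1) := hainv (Bk r k hk)
  have h2 : blockIdx c ((a⁻¹ (Ak r k hk) : Fin r) : ℕ) = blockIdx c k := hainv (Ak r k hk)
  have h3 : blockIdx c ((a⁻¹ (Bk r k hk) : Fin r) : ℕ) ≤ blockIdx c ((a⁻¹ (Ak r k hk) : Fin r) : ℕ) :=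
    blockIdx_mono c (le_of_lt hdesc)
  have h4 : blockIdx c k ≤ blockIdx c (k + 1) := blockIdx_mono c (by omega)
  unfold sameBlock
  omega

section WithHr
variable {lam mu : List ℕ} (hr : lam.sum + mu.sum = r)
include hr

lemma lamRegion_fix {u : Equiv.Perm (Fin r)} (hu : u ∈ youngSubgroup r (padRight r lam))
    {i : Fin r} (hi : lam.sum ≤ (i : ℕ)) : u i = i := by
  rw [mem_young] at hu
  have h1 := hu i
  rw [padRight_ge lam hi i.isLt] at h1
  have h2 : lam.sum ≤ ((u i : Fin r) : ℕ) := by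
    by_contra hc
    push_neg at hc
    rw [padRight_lt lam hc] at h1
    have := blockIdx_lt_length lam hc
    omega
  rw [padRight_ge lam h2 (u i).isLt] at h1
  apply Fin.ext
  omega

lemma muRegion_fix {v : Equiv.Perm (Fin r)} (hv : v ∈ youngSubgroup r (padLeft r mu))
    {i : Fin r} (hi : (i : ℕ) < lam.sum) : v i = i := by
  rw [mem_young] at hv
  have hi' : (i : ℕ) < r - mu.sum := by omega
  have h1 : blockIdx (padLeft r mu) ((v i : Fin r) : ℕ) = (i : ℕ) := by
    rw [hv i, padLeft_lt mu hi']
  have h2 : ((v i : Fin r) : ℕ) < r - mu.sum := by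
    by_contra hc
    push_neg at hc
    rw [padLeft_ge mu hc] at h1
    omega
  rw [padLeft_lt mu h2] at h1
  exact Fin.ext h1

lemma concat_region_lt {a : Equiv.Perm (Fin r)} (ha : a ∈ youngSubgroup r (lam ++ mu))
    {i : Fin r} (hi : (i : ℕ) < lam.sum) : ((a i : Fin r) : ℕ) < lam.sum := by
  rw [mem_young] at ha
  have h1 := ha i
  rw [concat_lt lam mu hi] at h1
  have h2 := blockIdx_lt_length lam hi
  by_contra hc
  push_neg at hc
  rw [concat_ge lam mu hc] at h1
  omega

lemma concat_region_ge {a : Equiv.Perm (Fin r)} (ha : a ∈ youngSubgroup r (lam ++ mu))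
    {i : Fin r} (hi : lam.sum ≤ (i : ℕ)) : lam.sum ≤ ((a i : Fin r) : ℕ) := by
  rw [mem_young] at ha
  have h1 := ha i
  rw [concat_ge lam mu hi] at h1
  by_contra hc
  push_neg at hc
  rw [concat_lt lam mu hc] at h1
  have h2 := blockIdx_lt_length lam hc
  omega

lemma sameBlock_padRight_iff {k : ℕ} (hk : k + 1 < r) (h : sameBlock (padRight r lam) k) :
    k + 1 < lam.sum ∧ sameBlock (lam ++ mu) k := by
  unfold sameBlock at h ⊢
  have hkr : k < r := by omega
  have hmain : k + 1 < lam.sum := by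
    by_contra hc
    push_neg at hc
    rw [padRight_ge lam hc hk] at h
    rcases lt_or_ge k lam.sum with h2 | h2
    · rw [padRight_lt lam h2] at h
      have := blockIdx_lt_length lam h2
      omega
    · rw [padRight_ge lam h2 hkr] at h
      omega
  refine ⟨hmain, ?_⟩
  rw [padRight_lt lam (by omega), padRight_lt lam hmain] at h
  rw [concat_lt lam mu (by omega), concat_lt lam mu hmain]
  exact h

lemma sameBlock_padLeft_iff {k : ℕ} (hk : k + 1 < r) (h : sameBlock (padLeft r mu) k) :
    lam.sum ≤ k ∧ sameBlock (lam ++ mu) k := by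
  unfold sameBlock at h ⊢
  have hL : lam.sum = r - mu.sum := by omega
  have hmain : lam.sum ≤ k := by
    by_contra hc
    push_neg at hc
    rw [padLeft_lt mu (by omega)] at h
    rcases lt_or_ge (k + 1) (r - mu.sum) with h2 | h2
    · rw [padLeft_lt mu h2] at h; omega
    · rw [padLeft_ge mu h2] at h; omega
  refine ⟨hmain, ?_⟩
  rw [padLeft_ge mu (by omega), padLeft_ge mu (by omega)] at h
  rw [concat_ge lam mu (by omega), concat_ge lam mu (by omega)]
  rw [← hL] at h
  omega

lemma sameBlock_concat_cases {k : ℕ} (hk : k + 1 < r) (h : sameBlock (lam ++ mu) k) :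
    sameBlock (padRight r lam) k ∨ sameBlock (padLeft r mu) k := by
  unfold sameBlock at h ⊢
  have hL : lam.sum = r - mu.sum := by omega
  rcases lt_or_ge (k + 1) lam.sum with h1 | h1
  · left
    rw [concat_lt lam mu (by omega), concat_lt lam mu h1] at h
    rw [padRight_lt lam (by omega), padRight_lt lam h1]
    exact h
  · rcases lt_or_ge k lam.sum with h2 | h2
    · exfalso
      rw [concat_lt lam mu h2, concat_ge lam mu h1] at h
      have := blockIdx_lt_length lam h2
      omega
    · right
      rw [concat_ge lam mu h2, concat_ge lam mu (by omega)] at h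
      rw [padLeft_ge mu (by omega), padLeft_ge mu (by omega), ← hL]
      omega

end WithHr
end Stmt10Aux
namespace Stmt10Aux
set_option linter.unusedSectionVars false
open Finset

variable {r : ℕ} {lam mu : List ℕ}

/-- minimal coset representative predicate -/
def Dmem (r : ℕ) (lam mu : List ℕ) (d : Equiv.Perm (Fin r)) : Prop :=
  ∀ a ∈ youngSubgroup r (lam ++ mu), invLen d ≤ invLen (a * d)

lemma D_asc {d : Equiv.Perm (Fin r)} (hd : Dmem r lam mu d) {k : ℕ} (hk : k + 1 < r)
    (hsb : sameBlock (lam ++ mu) k) : d⁻¹ (Ak r k hk) < d⁻¹ (Bk r k hk) := by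
  rcases lt_trichotomy (d⁻¹ (Ak r k hk)) (d⁻¹ (Bk r k hk)) with h | h | h
  · exact h
  · exfalso
    have : Ak r k hk = Bk r k hk := by
      have := congrArg d h; simpa [Equiv.Perm.apply_inv_self] using this
    have hAB := Ak_lt_Bk r k hk
    rw [this] at hAB; exact lt_irrefl _ hAB
  · exfalso
    have h1 := invLen_swap_descent hk d h
    have h2 := hd (sw r k hk) (sw_mem_young hk hsb)
    omega

lemma D_chain {d : Equiv.Perm (Fin r)} (hd : Dmem r lam mu d) :
    ∀ m : ℕ, ∀ i j : Fin r, (j : ℕ) = (i : ℕ) + m + 1 →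
      blockIdx (lam ++ mu) (i : ℕ) = blockIdx (lam ++ mu) (j : ℕ) → d⁻¹ i < d⁻¹ j := by
  intro m
  induction m with
  | zero =>
    intro i j hj hb
    have hk : (i : ℕ) + 1 < r := by have := j.isLt; omega
    have hi : i = Ak r (i : ℕ) hk := by apply Fin.ext; rfl
    have hjj : j = Bk r (i : ℕ) hk := by apply Fin.ext; simpa [Bk] using hj
    have hsb : sameBlock (lam ++ mu) (i : ℕ) := by
      unfold sameBlock
      rw [hb, hjj]; rfl
    rw [hi, hjj]
    exact D_asc hd hk hsb
  | succ n ih =>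
    intro i j hj hb
    have hkm : (i : ℕ) + n + 1 < r := by have := j.isLt; omega
    set mid : Fin r := ⟨(i : ℕ) + n + 1, hkm⟩ with hmid
    have hb1 : blockIdx (lam ++ mu) (i : ℕ) ≤ blockIdx (lam ++ mu) (mid : ℕ) :=
      blockIdx_mono _ (by simp [hmid]; omega)
    have hb2 : blockIdx (lam ++ mu) (mid : ℕ) ≤ blockIdx (lam ++ mu) (j : ℕ) :=
      blockIdx_mono _ (by simp [hmid]; omega)
    have hbi : blockIdx (lam ++ mu) (i : ℕ) = blockIdx (lam ++ mu) (mid : ℕ) := by omega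
    have hbj : blockIdx (lam ++ mu) (mid : ℕ) = blockIdx (lam ++ mu) (j : ℕ) := by omega
    have h1 : d⁻¹ i < d⁻¹ mid := ih i mid rfl hbi
    have hkm2 : ((mid : ℕ)) + 1 < r := by have := j.isLt; simp [hmid]; omega
    have hmid2 : mid = Ak r (mid : ℕ) hkm2 := by apply Fin.ext; rfl
    have hjj : j = Bk r (mid : ℕ) hkm2 := by apply Fin.ext; simp [Bk, hmid]; omega
    have hsb : sameBlock (lam ++ mu) (mid : ℕ) := by
      unfold sameBlock
      rw [hbj, hjj]; rfl
    have h2 : d⁻¹ mid < d⁻¹ j := by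
      rw [hmid2, hjj]
      exact D_asc hd hkm2 hsb
    exact lt_trans h1 h2

lemma D_lt {d : Equiv.Perm (Fin r)} (hd : Dmem r lam mu d) {i j : Fin r} (hij : i < j)
    (hb : blockIdx (lam ++ mu) (i : ℕ) = blockIdx (lam ++ mu) (j : ℕ)) : d⁻¹ i < d⁻¹ j := by
  have h : (j : ℕ) = (i : ℕ) + ((j : ℕ) - (i : ℕ) - 1) + 1 := by
    have := Fin.lt_def.1 hij; omega
  exact D_chain hd _ i j h hb

/-- length additivity on cosets -/
lemma invLen_D_add {d : Equiv.Perm (Fin r)} (hd : Dmem r lam mu d) :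
    ∀ n a, invLen a = n → a ∈ youngSubgroup r (lam ++ mu) →
      invLen (a * d) = invLen a + invLen d := by
  intro n
  induction n using Nat.strong_induction_on with
  | _ n ih =>
    intro a hn ha
    rcases eq_or_ne a 1 with h1 | h1
    · subst h1; simp [invLen_one]
    · obtain ⟨k, hk, hsb, hdesc⟩ := exists_descent_young ha h1
      set a' := sw r k hk * a with ha'
      have hlen : invLen a = invLen a' + 1 := invLen_swap_descent hk a hdesc
      have ha'W : a' ∈ youngSubgroup r (lam ++ mu) := mul_mem (sw_mem_young hk hsb) ha
      have hih := ih (invLen a') (by omega) a' rfl ha'W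
      have hainv : a⁻¹ ∈ youngSubgroup r (lam ++ mu) := inv_mem ha
      rw [mem_young] at hainv
      have hasc : (a' * d)⁻¹ (Ak r k hk) < (a' * d)⁻¹ (Bk r k hk) := by
        have e1 : (a' * d)⁻¹ (Ak r k hk) = d⁻¹ (a⁻¹ (Bk r k hk)) := by
          simp only [ha', mul_inv_rev, Equiv.Perm.mul_apply]
          congr 1
          rw [show (sw r k hk)⁻¹ = sw r k hk from by rw [sw_eq_swap]; exact Equiv.swap_inv _ _]
          rw [sw_apply_Ak]
        have e2 : (a' * d)⁻¹ (Bk r k hk) = d⁻¹ (a⁻¹ (Ak r k hk)) := by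
          simp only [ha', mul_inv_rev, Equiv.Perm.mul_apply]
          congr 1
          rw [show (sw r k hk)⁻¹ = sw r k hk from by rw [sw_eq_swap]; exact Equiv.swap_inv _ _]
          rw [sw_apply_Bk]
        rw [e1, e2]
        apply D_lt hd hdesc
        have hb1 := hainv (Bk r k hk)
        have hb2 := hainv (Ak r k hk)
        rw [hb1, hb2]
        exact hsb.symm
      have h2 : invLen (sw r k hk * (a' * d)) = invLen (a' * d) + 1 :=
        invLen_swap_ascent hk _ hasc
      have h3 : sw r k hk * (a' * d) = a * d := by
        rw [← mul_assoc, ha', sw_mul_sw_mul]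
      rw [h3] at h2
      omega

/-- existence of coset decomposition -/
lemma exists_decomp : ∀ n (w : Equiv.Perm (Fin r)), invLen w ≤ n →
    ∃ a d, a ∈ youngSubgroup r (lam ++ mu) ∧ Dmem r lam mu d ∧ w = a * d := by
  intro n
  induction n with
  | zero =>
    intro w hw
    refine ⟨1, w, one_mem _, ?_, (one_mul w).symm⟩
    intro a ha
    omega
  | succ n ih =>
    intro w hw
    by_cases hD : Dmem r lam mu w
    · exact ⟨1, w, one_mem _, hD, (one_mul w).symm⟩
    · unfold Dmem at hD
      push_neg at hD
      obtain ⟨a, ha, hlt⟩ := hD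
      obtain ⟨a₁, d, ha₁, hd, heq⟩ := ih (a * w) (by omega)
      refine ⟨a⁻¹ * a₁, d, mul_mem (inv_mem ha) ha₁, hd, ?_⟩
      rw [mul_assoc, ← heq, ← mul_assoc, inv_mul_cancel, one_mul]

/-- uniqueness of decomposition -/
lemma decomp_unique {a a' d d' : Equiv.Perm (Fin r)}
    (ha : a ∈ youngSubgroup r (lam ++ mu)) (ha' : a' ∈ youngSubgroup r (lam ++ mu))
    (hd : Dmem r lam mu d) (hd' : Dmem r lam mu d') (heq : a * d = a' * d') :
    a = a' ∧ d = d' := by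
  set e := a'⁻¹ * a with he
  have heW : e ∈ youngSubgroup r (lam ++ mu) := mul_mem (inv_mem ha') ha
  have hed : e * d = d' := by
    rw [he, mul_assoc, heq, ← mul_assoc, inv_mul_cancel, one_mul]
  have h1 : invLen d' = invLen e + invLen d := by
    rw [← hed]; exact invLen_D_add hd _ e rfl heW
  have h2 : invLen d' ≤ invLen d := by
    have h := hd' e⁻¹ (inv_mem heW)
    have hh : e⁻¹ * d' = d := by rw [← hed, ← mul_assoc, inv_mul_cancel, one_mul]
    rwa [hh] at h
  have he1 : e = 1 := eq_one_of_invLen_zero e (by omega)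
  have haa : a = a' := by
    have : a'⁻¹ * a = 1 := he1
    calc a = a' * (a'⁻¹ * a) := by rw [← mul_assoc, mul_inv_cancel, one_mul]
    _ = a' := by rw [this, mul_one]
  refine ⟨haa, ?_⟩
  rw [haa] at heq
  exact mul_left_cancel heq

end Stmt10Aux
namespace Stmt10Aux
set_option linter.unusedSectionVars false
open Finset

variable {r : ℕ}

/-- number of inversions within the μ-region -/
noncomputable def mlen (L : ℕ) (a : Equiv.Perm (Fin r)) : ℕ :=
  invP (fun p => L ≤ (p.1 : ℕ)) a

lemma invP_swap_notP (P : Fin r × Fin r → Prop) {k : ℕ} (hk : k + 1 < r)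
    (w : Equiv.Perm (Fin r)) (h1 : ¬P (w⁻¹ (Ak r k hk), w⁻¹ (Bk r k hk)))
    (h2 : ¬P (w⁻¹ (Bk r k hk), w⁻¹ (Ak r k hk))) :
    invP P (sw r k hk * w) = invP P w := by
  rcases lt_trichotomy (w⁻¹ (Ak r k hk)) (w⁻¹ (Bk r k hk)) with h | h | h
  · rw [invP_swap_ascent P hk w h, if_neg h1]
    omega
  · exfalso
    have : Ak r k hk = Bk r k hk := by
      have := congrArg w h; simpa [Equiv.Perm.apply_inv_self] using this
    have hAB := Ak_lt_Bk r k hk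
    rw [this] at hAB; exact lt_irrefl _ hAB
  · set w' := sw r k hk * w with hw'
    have e1 : w'⁻¹ (Ak r k hk) = w⁻¹ (Bk r k hk) := by
      rw [hw', inv_sw_mul, sw_apply_Ak]
    have e2 : w'⁻¹ (Bk r k hk) = w⁻¹ (Ak r k hk) := by
      rw [hw', inv_sw_mul, sw_apply_Bk]
    have hasc : w'⁻¹ (Ak r k hk) < w'⁻¹ (Bk r k hk) := by rw [e1, e2]; exact h
    have := invP_swap_ascent P hk w' hasc
    rw [sw_mul_sw_mul, e1, e2, if_neg h2] at this
    omega

lemma invP_swap_P_asc (P : Fin r × Fin r → Prop) {k : ℕ} (hk : k + 1 < r)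
    (w : Equiv.Perm (Fin r)) (hasc : w⁻¹ (Ak r k hk) < w⁻¹ (Bk r k hk))
    (hP : P (w⁻¹ (Ak r k hk), w⁻¹ (Bk r k hk))) :
    invP P (sw r k hk * w) = invP P w + 1 := by
  rw [invP_swap_ascent P hk w hasc, if_pos hP]

lemma invP_swap_P_desc (P : Fin r × Fin r → Prop) {k : ℕ} (hk : k + 1 < r)
    (w : Equiv.Perm (Fin r)) (hdesc : w⁻¹ (Bk r k hk) < w⁻¹ (Ak r k hk))
    (hP : P (w⁻¹ (Bk r k hk), w⁻¹ (Ak r k hk))) :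
    invP P w = invP P (sw r k hk * w) + 1 := by
  set w' := sw r k hk * w with hw'
  have e1 : w'⁻¹ (Ak r k hk) = w⁻¹ (Bk r k hk) := by rw [hw', inv_sw_mul, sw_apply_Ak]
  have e2 : w'⁻¹ (Bk r k hk) = w⁻¹ (Ak r k hk) := by rw [hw', inv_sw_mul, sw_apply_Bk]
  have hasc : w'⁻¹ (Ak r k hk) < w'⁻¹ (Bk r k hk) := by rw [e1, e2]; exact hdesc
  have := invP_swap_P_asc P hk w' hasc (by rw [e1, e2]; exact hP)
  rwa [sw_mul_sw_mul] at this

section WithHr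
variable {lam mu : List ℕ} (hr : lam.sum + mu.sum = r)
include hr

lemma lamRegion_lt {u : Equiv.Perm (Fin r)} (hu : u ∈ youngSubgroup r (padRight r lam))
    {i : Fin r} (hi : (i : ℕ) < lam.sum) : ((u i : Fin r) : ℕ) < lam.sum := by
  by_contra hc
  push_neg at hc
  have := lamRegion_fix hr hu hc
  have : u i = i := u.injective this
  omega

lemma muRegion_ge {v : Equiv.Perm (Fin r)} (hv : v ∈ youngSubgroup r (padLeft r mu))
    {i : Fin r} (hi : lam.sum ≤ (i : ℕ)) : lam.sum ≤ ((v i : Fin r) : ℕ) := by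
  by_contra hc
  push_neg at hc
  have h1 := muRegion_fix hr hv hc
  have : v i = i := v.injective h1
  omega

/-- λ-type simple reflections don't change the μ-inversion count of elements of `W`. -/
lemma mlen_sw_lam {k : ℕ} (hk : k + 1 < r) (hks : k + 1 < lam.sum)
    {a : Equiv.Perm (Fin r)} (ha : a ∈ youngSubgroup r (lam ++ mu)) :
    mlen lam.sum (sw r k hk * a) = mlen lam.sum a := by
  unfold mlen
  apply invP_swap_notP
  · simp only [not_le]
    exact concat_region_lt hr (inv_mem ha) (by simp [Ak]; omega)
  · simp only [not_le]
    exact concat_region_lt hr (inv_mem ha) (by simp [Bk]; omega)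

lemma mlen_sw_mu_asc {k : ℕ} (hk : k + 1 < r) (hks : lam.sum ≤ k)
    {a : Equiv.Perm (Fin r)} (ha : a ∈ youngSubgroup r (lam ++ mu))
    (hasc : a⁻¹ (Ak r k hk) < a⁻¹ (Bk r k hk)) :
    mlen lam.sum (sw r k hk * a) = mlen lam.sum a + 1 := by
  unfold mlen
  apply invP_swap_P_asc _ hk a hasc
  exact concat_region_ge hr (inv_mem ha) (by simp [Ak]; omega)

lemma mlen_sw_mu_desc {k : ℕ} (hk : k + 1 < r) (hks : lam.sum ≤ k)
    {a : Equiv.Perm (Fin r)} (ha : a ∈ youngSubgroup r (lam ++ mu))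
    (hdesc : a⁻¹ (Bk r k hk) < a⁻¹ (Ak r k hk)) :
    mlen lam.sum a = mlen lam.sum (sw r k hk * a) + 1 := by
  unfold mlen
  apply invP_swap_P_desc _ hk a hdesc
  exact concat_region_ge hr (inv_mem ha) (by simp [Bk]; omega)

/-- for `v` in the μ-part Young subgroup, all inversions are μ-inversions. -/
lemma mlen_eq_invLen {v : Equiv.Perm (Fin r)} (hv : v ∈ youngSubgroup r (padLeft r mu)) :
    mlen lam.sum v = invLen v := by
  unfold mlen invP invLen
  congr 1
  ext p
  simp only [Finset.mem_filter, Finset.mem_univ, true_and]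
  constructor
  · rintro ⟨_, h2, h3⟩; exact ⟨h2, h3⟩
  · rintro ⟨h2, h3⟩
    refine ⟨?_, h2, h3⟩
    by_contra hc
    push_neg at hc
    have hv1 : v p.1 = p.1 := muRegion_fix hr hv hc
    have hvp2 : ((v p.2 : Fin r) : ℕ) < lam.sum := by
      have := Fin.lt_def.1 h3
      rw [hv1] at this
      omega
    have hv2 : v (v p.2) = v p.2 := muRegion_fix hr hv hvp2
    have : v p.2 = p.2 := v.injective hv2
    rw [hv1, this] at h3
    exact absurd (Fin.lt_def.1 h3) (by have := Fin.lt_def.1 h2; omega)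

/-- action of a product `u * v` -/
lemma uv_apply_lt {u v : Equiv.Perm (Fin r)} (hu : u ∈ youngSubgroup r (padRight r lam))
    (hv : v ∈ youngSubgroup r (padLeft r mu)) {p : Fin r} (hp : (p : ℕ) < lam.sum) :
    (u * v) p = u p := by
  have : v p = p := muRegion_fix hr hv hp
  simp [Equiv.Perm.mul_apply, this]

lemma uv_apply_ge {u v : Equiv.Perm (Fin r)} (hu : u ∈ youngSubgroup r (padRight r lam))
    (hv : v ∈ youngSubgroup r (padLeft r mu)) {p : Fin r} (hp : lam.sum ≤ (p : ℕ)) :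
    (u * v) p = v p := by
  have h1 : lam.sum ≤ ((v p : Fin r) : ℕ) := muRegion_ge hr hv hp
  simp [Equiv.Perm.mul_apply, lamRegion_fix hr hu h1]

lemma mlen_uv {u v : Equiv.Perm (Fin r)} (hu : u ∈ youngSubgroup r (padRight r lam))
    (hv : v ∈ youngSubgroup r (padLeft r mu)) :
    mlen lam.sum (u * v) = invLen v := by
  rw [← mlen_eq_invLen hr hv]
  unfold mlen invP
  congr 1
  ext p
  simp only [Finset.mem_filter, Finset.mem_univ, true_and]
  constructor
  · rintro ⟨h1, h2, h3⟩
    refine ⟨h1, h2, ?_⟩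
    have hp2 : lam.sum ≤ (p.2 : ℕ) := by have := Fin.lt_def.1 h2; omega
    rwa [uv_apply_ge hr hu hv h1, uv_apply_ge hr hu hv hp2] at h3
  · rintro ⟨h1, h2, h3⟩
    refine ⟨h1, h2, ?_⟩
    have hp2 : lam.sum ≤ (p.2 : ℕ) := by have := Fin.lt_def.1 h2; omega
    rw [uv_apply_ge hr hu hv h1, uv_apply_ge hr hu hv hp2]
    exact h3

end WithHr
end Stmt10Aux
namespace Stmt10Aux
set_option linter.unusedSectionVars false
set_option linter.unusedVariables false
open Finset

variable {r : ℕ}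

lemma invLen_split (L : ℕ) (w : Equiv.Perm (Fin r)) :
    invLen w = mlen L w + invP (fun p => ¬(L ≤ (p.1 : ℕ))) w := by
  classical
  unfold invLen mlen invP
  rw [← Finset.card_union_of_disjoint (by
    rw [Finset.disjoint_left]
    intro p hp1 hp2
    simp only [Finset.mem_filter] at hp1 hp2
    exact hp2.2.1 hp1.2.1)]
  congr 1
  ext p
  simp only [Finset.mem_union, Finset.mem_filter, Finset.mem_univ, true_and]
  by_cases hL : L ≤ (p.1 : ℕ) <;> tauto

section WithHr
variable {lam mu : List ℕ} (hr : lam.sum + mu.sum = r)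
include hr

lemma invP_notP_uv {u v : Equiv.Perm (Fin r)} (hu : u ∈ youngSubgroup r (padRight r lam))
    (hv : v ∈ youngSubgroup r (padLeft r mu)) :
    invP (fun p : Fin r × Fin r => ¬(lam.sum ≤ (p.1 : ℕ))) (u * v) = invLen u := by
  unfold invP invLen
  congr 1
  ext p
  simp only [Finset.mem_filter, Finset.mem_univ, true_and]
  constructor
  · rintro ⟨h1, h2, h3⟩
    push_neg at h1
    rcases lt_or_ge (p.2 : ℕ) lam.sum with hp2 | hp2
    · exact ⟨h2, by rwa [uv_apply_lt hr hu hv h1, uv_apply_lt hr hu hv hp2] at h3⟩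
    · exfalso
      rw [uv_apply_lt hr hu hv h1, uv_apply_ge hr hu hv hp2] at h3
      have ha : ((u p.1 : Fin r) : ℕ) < lam.sum := lamRegion_lt hr hu h1
      have hb : lam.sum ≤ ((v p.2 : Fin r) : ℕ) := muRegion_ge hr hv hp2
      have := Fin.lt_def.1 h3
      omega
  · rintro ⟨h2, h3⟩
    have hp2 : (p.2 : ℕ) < lam.sum := by
      by_contra hc
      push_neg at hc
      have h4 : u p.2 = p.2 := lamRegion_fix hr hu hc
      rcases lt_or_ge (p.1 : ℕ) lam.sum with hp1 | hp1
      · have := lamRegion_lt hr hu hp1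
        have h5 := Fin.lt_def.1 h3
        rw [h4] at h5
        omega
      · have h6 : u p.1 = p.1 := lamRegion_fix hr hu hp1
        rw [h4, h6] at h3
        exact absurd (Fin.lt_def.1 h3) (by have := Fin.lt_def.1 h2; omega)
    have hp1 : (p.1 : ℕ) < lam.sum := by have := Fin.lt_def.1 h2; omega
    refine ⟨by omega, h2, ?_⟩
    rwa [uv_apply_lt hr hu hv hp1, uv_apply_lt hr hu hv hp2]

lemma invLen_uv {u v : Equiv.Perm (Fin r)} (hu : u ∈ youngSubgroup r (padRight r lam))
    (hv : v ∈ youngSubgroup r (padLeft r mu)) :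
    invLen (u * v) = invLen u + invLen v := by
  rw [invLen_split lam.sum (u * v), mlen_uv hr hu hv, invP_notP_uv hr hu hv]
  omega

lemma uv_mem_concat {u v : Equiv.Perm (Fin r)} (hu : u ∈ youngSubgroup r (padRight r lam))
    (hv : v ∈ youngSubgroup r (padLeft r mu)) :
    u * v ∈ youngSubgroup r (lam ++ mu) := by
  rw [mem_young]
  intro i
  have hL : lam.sum = r - mu.sum := by omega
  rcases lt_or_ge (i : ℕ) lam.sum with hi | hi
  · rw [uv_apply_lt hr hu hv hi]
    have h1 : ((u i : Fin r) : ℕ) < lam.sum := lamRegion_lt hr hu hi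
    rw [concat_lt lam mu h1, concat_lt lam mu hi]
    have h2 := (mem_young.1 hu) i
    rwa [padRight_lt lam h1, padRight_lt lam hi] at h2
  · rw [uv_apply_ge hr hu hv hi]
    have h1 : lam.sum ≤ ((v i : Fin r) : ℕ) := muRegion_ge hr hv hi
    rw [concat_ge lam mu h1, concat_ge lam mu hi]
    have h2 := (mem_young.1 hv) i
    rw [padLeft_ge mu (by omega), padLeft_ge mu (by omega), ← hL] at h2
    omega

/-- the λ-part of an element of the Young subgroup -/
noncomputable def uOf (lam : List ℕ) (a : Equiv.Perm (Fin r))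
    (hinj : Function.Injective (fun i : Fin r => if (i : ℕ) < lam.sum then a i else i)) :
    Equiv.Perm (Fin r) :=
  Equiv.ofBijective _ ((Finite.injective_iff_bijective).1 hinj)

lemma uOf_inj {a : Equiv.Perm (Fin r)} (ha : a ∈ youngSubgroup r (lam ++ mu)) :
    Function.Injective (fun i : Fin r => if (i : ℕ) < lam.sum then a i else i) := by
  intro i j h
  simp only at h
  rcases lt_or_ge (i : ℕ) lam.sum with hi | hi <;> rcases lt_or_ge (j : ℕ) lam.sum with hj | hj
  · rw [if_pos hi, if_pos hj] at h; exact a.injective h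
  · rw [if_pos hi, if_neg (by omega)] at h
    have := concat_region_lt hr ha hi
    rw [h] at this; omega
  · rw [if_neg (by omega), if_pos hj] at h
    have := concat_region_lt hr ha hj
    rw [← h] at this; omega
  · rw [if_neg (by omega), if_neg (by omega)] at h; exact h

lemma uOf_apply_lt {a : Equiv.Perm (Fin r)} (ha : a ∈ youngSubgroup r (lam ++ mu))
    {i : Fin r} (hi : (i : ℕ) < lam.sum) : uOf lam a (uOf_inj hr ha) i = a i := by
  simp [uOf, Equiv.ofBijective, hi]

lemma uOf_apply_ge {a : Equiv.Perm (Fin r)} (ha : a ∈ youngSubgroup r (lam ++ mu))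
    {i : Fin r} (hi : lam.sum ≤ (i : ℕ)) : uOf lam a (uOf_inj hr ha) i = i := by
  simp only [uOf, Equiv.ofBijective, Equiv.coe_fn_mk]
  rw [if_neg (by omega)]

lemma uOf_mem {a : Equiv.Perm (Fin r)} (ha : a ∈ youngSubgroup r (lam ++ mu)) :
    uOf lam a (uOf_inj hr ha) ∈ youngSubgroup r (padRight r lam) := by
  rw [mem_young]
  intro i
  rcases lt_or_ge (i : ℕ) lam.sum with hi | hi
  · rw [uOf_apply_lt hr ha hi]
    have h1 : ((a i : Fin r) : ℕ) < lam.sum := concat_region_lt hr ha hi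
    rw [padRight_lt lam h1, padRight_lt lam hi]
    have h2 := (mem_young.1 ha) i
    rwa [concat_lt lam mu h1, concat_lt lam mu hi] at h2
  · rw [uOf_apply_ge hr ha hi]

noncomputable def vOf (lam mu : List ℕ) (hr : lam.sum + mu.sum = r) (a : Equiv.Perm (Fin r))
    (ha : a ∈ youngSubgroup r (lam ++ mu)) : Equiv.Perm (Fin r) :=
  (uOf lam a (uOf_inj hr ha))⁻¹ * a

lemma vOf_apply_lt {a : Equiv.Perm (Fin r)} (ha : a ∈ youngSubgroup r (lam ++ mu))
    {i : Fin r} (hi : (i : ℕ) < lam.sum) : vOf lam mu hr a ha i = i := by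
  unfold vOf
  simp only [Equiv.Perm.mul_apply]
  have h1 : uOf lam a (uOf_inj hr ha) i = a i := uOf_apply_lt hr ha hi
  rw [← h1, Equiv.Perm.inv_apply_self]

lemma vOf_apply_ge {a : Equiv.Perm (Fin r)} (ha : a ∈ youngSubgroup r (lam ++ mu))
    {i : Fin r} (hi : lam.sum ≤ (i : ℕ)) : vOf lam mu hr a ha i = a i := by
  unfold vOf
  simp only [Equiv.Perm.mul_apply]
  have h2 : lam.sum ≤ ((a i : Fin r) : ℕ) := concat_region_ge hr ha hi
  have h1 : uOf lam a (uOf_inj hr ha) (a i) = a i := uOf_apply_ge hr ha h2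
  rw [← h1, Equiv.Perm.inv_apply_self, h1]

lemma vOf_mem {a : Equiv.Perm (Fin r)} (ha : a ∈ youngSubgroup r (lam ++ mu)) :
    vOf lam mu hr a ha ∈ youngSubgroup r (padLeft r mu) := by
  rw [mem_young]
  intro i
  have hL : lam.sum = r - mu.sum := by omega
  rcases lt_or_ge (i : ℕ) lam.sum with hi | hi
  · rw [vOf_apply_lt hr ha hi]
  · rw [vOf_apply_ge hr ha hi]
    have h1 : lam.sum ≤ ((a i : Fin r) : ℕ) := concat_region_ge hr ha hi
    rw [padLeft_ge mu (by omega), padLeft_ge mu (by omega), ← hL]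
    have h2 := (mem_young.1 ha) i
    rw [concat_ge lam mu h1, concat_ge lam mu hi] at h2
    omega

lemma uOf_mul_vOf {a : Equiv.Perm (Fin r)} (ha : a ∈ youngSubgroup r (lam ++ mu)) :
    uOf lam a (uOf_inj hr ha) * vOf lam mu hr a ha = a := by
  unfold vOf
  rw [← mul_assoc, mul_inv_cancel, one_mul]

lemma uv_unique {u v u' v' : Equiv.Perm (Fin r)}
    (hu : u ∈ youngSubgroup r (padRight r lam)) (hv : v ∈ youngSubgroup r (padLeft r mu))
    (hu' : u' ∈ youngSubgroup r (padRight r lam)) (hv' : v' ∈ youngSubgroup r (padLeft r mu))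
    (h : u * v = u' * v') : u = u' ∧ v = v' := by
  have hueq : u = u' := by
    apply Equiv.ext
    intro i
    rcases lt_or_ge (i : ℕ) lam.sum with hi | hi
    · have h1 : (u * v) i = u i := uv_apply_lt hr hu hv hi
      have h2 : (u' * v') i = u' i := uv_apply_lt hr hu' hv' hi
      rw [← h1, ← h2, h]
    · rw [lamRegion_fix hr hu hi, lamRegion_fix hr hu' hi]
  refine ⟨hueq, ?_⟩
  rw [hueq] at h
  exact mul_left_cancel h

end WithHr
end Stmt10Aux
namespace Stmt10Aux
set_option linter.unusedSectionVars false
set_option linter.unusedVariables false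
open Finset

variable {r : ℕ}

section Algebra
variable {H : Type} [Ring H] [Algebra (LaurentPolynomial ℤ) H]
  (b : Module.Basis (Equiv.Perm (Fin r)) (LaurentPolynomial ℤ) H)
  (hone : b 1 = 1)
  (hmul : ∀ (k : ℕ) (hk : k + 1 < r) (w : Equiv.Perm (Fin r)),
      (invLen (sw r k hk * w) = invLen w + 1 →
        b (sw r k hk) * b w = b (sw r k hk * w)) ∧
      (invLen (sw r k hk * w) ≠ invLen w + 1 →
        b (sw r k hk) * b w = (LaurentPolynomial.T 2 : LaurentPolynomial ℤ) • b (sw r k hk * w)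
          + ((LaurentPolynomial.T 2 - 1 : LaurentPolynomial ℤ)) • b w))

include hone hmul

lemma bmul : ∀ n (u w : Equiv.Perm (Fin r)), invLen u = n →
    invLen (u * w) = invLen u + invLen w → b u * b w = b (u * w) := by
  intro n
  induction n using Nat.strong_induction_on with
  | _ n ih =>
    intro u w hn hadd
    rcases eq_or_ne u 1 with h1 | h1
    · subst h1; rw [hone, one_mul, one_mul]
    · obtain ⟨k, hk, hdesc⟩ := exists_descent u h1
      set u' := sw r k hk * u with hu'
      have hlu : invLen u = invLen u' + 1 := invLen_swap_descent hk u hdesc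
      have hsu' : sw r k hk * u' = u := by rw [hu', sw_mul_sw_mul]
      -- invLen (u' * w) bookkeeping
      have hsub : invLen (u' * w) ≤ invLen u' + invLen w := invLen_mul_le u' w
      have hup : invLen (sw r k hk * (u' * w)) ≤ invLen (u' * w) + 1 := by
        rcases lt_trichotomy ((u' * w)⁻¹ (Ak r k hk)) ((u' * w)⁻¹ (Bk r k hk)) with h | h | h
        · rw [invLen_swap_ascent hk _ h]
        · exfalso
          have : Ak r k hk = Bk r k hk := by
            have := congrArg (u' * w) h; simpa [Equiv.Perm.apply_inv_self] using this
          have hAB := Ak_lt_Bk r k hk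
          rw [this] at hAB; exact lt_irrefl _ hAB
        · have := invLen_swap_descent hk _ h
          omega
      have huw : sw r k hk * (u' * w) = u * w := by rw [← mul_assoc, hsu']
      rw [huw] at hup
      have hadd' : invLen (u' * w) = invLen u' + invLen w := by omega
      have hasc : invLen (sw r k hk * (u' * w)) = invLen (u' * w) + 1 := by
        rw [huw]; omega
      have e1 : b u' * b w = b (u' * w) := ih (invLen u') (by omega) u' w rfl hadd'
      have e2 : b (sw r k hk) * b u' = b u := by
        have := (hmul k hk u').1 (by rw [hsu']; omega)
        rwa [hsu'] at this
      have e3 : b (sw r k hk) * b (u' * w) = b (u * w) := by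
        have := (hmul k hk (u' * w)).1 hasc
        rwa [huw] at this
      calc b u * b w = b (sw r k hk) * b u' * b w := by rw [e2]
      _ = b (sw r k hk) * (b u' * b w) := by rw [mul_assoc]
      _ = b (sw r k hk) * b (u' * w) := by rw [e1]
      _ = b (u * w) := e3

end Algebra
end Stmt10Aux
namespace Stmt10Aux
set_option linter.unusedSectionVars false
set_option linter.unusedVariables false
open Finset LaurentPolynomial

variable {r : ℕ}

section Algebra
variable {H : Type} [Ring H] [Algebra (LaurentPolynomial ℤ) H]
  (b : Module.Basis (Equiv.Perm (Fin r)) (LaurentPolynomial ℤ) H)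
  (hone : b 1 = 1)
  (hmul : ∀ (k : ℕ) (hk : k + 1 < r) (w : Equiv.Perm (Fin r)),
      (invLen (sw r k hk * w) = invLen w + 1 →
        b (sw r k hk) * b w = b (sw r k hk * w)) ∧
      (invLen (sw r k hk * w) ≠ invLen w + 1 →
        b (sw r k hk) * b w = (LaurentPolynomial.T 2 : LaurentPolynomial ℤ) • b (sw r k hk * w)
          + ((LaurentPolynomial.T 2 - 1 : LaurentPolynomial ℤ)) • b w))

include hmul

lemma mul_bs (k : ℕ) (hk : k + 1 < r) (h : H) :
    b (sw r k hk) * h = b.equivFun.symm (fun y =>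
      if invLen (sw r k hk * y) = invLen y + 1
      then (T 2 : LaurentPolynomial ℤ) * b.equivFun h (sw r k hk * y)
      else b.equivFun h (sw r k hk * y)
        + (T 2 - 1 : LaurentPolynomial ℤ) * b.equivFun h y) := by
  classical
  set c : Equiv.Perm (Fin r) → LaurentPolynomial ℤ := b.equivFun h with hc
  have hh : h = ∑ x, c x • b x := (b.sum_equivFun h).symm
  have lhs1 : b (sw r k hk) * h = ∑ x, c x • (b (sw r k hk) * b x) := by
    conv_lhs => rw [hh]
    rw [Finset.mul_sum]
    exact Finset.sum_congr rfl (fun x _ => (mul_smul_comm _ _ _))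
  set P : Equiv.Perm (Fin r) → Prop := fun x => invLen (sw r k hk * x) = invLen x + 1 with hP
  have hsplit := Finset.sum_filter_add_sum_filter_not Finset.univ P
    (fun x => c x • (b (sw r k hk) * b x))
  have easc : ∀ x ∈ Finset.univ.filter P, c x • (b (sw r k hk) * b x) = c x • b (sw r k hk * x) := by
    intro x hx
    rw [Finset.mem_filter] at hx
    rw [(hmul k hk x).1 hx.2]
  have edesc : ∀ x ∈ Finset.univ.filter (fun x => ¬P x),
      c x • (b (sw r k hk) * b x) =
        ((T 2 : LaurentPolynomial ℤ) * c x) • b (sw r k hk * x)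
          + (((T 2 : LaurentPolynomial ℤ) - 1) * c x) • b x := by
    intro x hx
    rw [Finset.mem_filter] at hx
    rw [(hmul k hk x).2 hx.2, smul_add, smul_smul, smul_smul]
    ring_nf
  have hAD : ∀ x ∈ Finset.univ.filter P, sw r k hk * x ∈ Finset.univ.filter (fun y => ¬P y) := by
    intro x hx
    rw [Finset.mem_filter] at hx ⊢
    exact ⟨Finset.mem_univ _, asc_flip hk x hx.2⟩
  have hDA : ∀ x ∈ Finset.univ.filter (fun y => ¬P y), sw r k hk * x ∈ Finset.univ.filter P := by
    intro x hx
    rw [Finset.mem_filter] at hx ⊢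
    exact ⟨Finset.mem_univ _, desc_flip hk x hx.2⟩
  have rein1 : ∑ x ∈ Finset.univ.filter P, c x • b (sw r k hk * x)
      = ∑ y ∈ Finset.univ.filter (fun y => ¬P y), c (sw r k hk * y) • b y := by
    apply Finset.sum_nbij' (fun x => sw r k hk * x) (fun y => sw r k hk * y)
      hAD hDA (fun x _ => sw_mul_sw_mul k hk x) (fun y _ => sw_mul_sw_mul k hk y)
    intro x hx
    rw [sw_mul_sw_mul]
  have rein2 : ∑ x ∈ Finset.univ.filter (fun y => ¬P y),
        ((T 2 : LaurentPolynomial ℤ) * c x) • b (sw r k hk * x)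
      = ∑ y ∈ Finset.univ.filter P, ((T 2 : LaurentPolynomial ℤ) * c (sw r k hk * y)) • b y := by
    apply Finset.sum_nbij' (fun x => sw r k hk * x) (fun y => sw r k hk * y)
      hDA hAD (fun x _ => sw_mul_sw_mul k hk x) (fun y _ => sw_mul_sw_mul k hk y)
    intro x hx
    rw [sw_mul_sw_mul]
  have rhs1 : b.equivFun.symm (fun y =>
      if invLen (sw r k hk * y) = invLen y + 1
      then (T 2 : LaurentPolynomial ℤ) * c (sw r k hk * y)
      else c (sw r k hk * y) + ((T 2 : LaurentPolynomial ℤ) - 1) * c y)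
      = ∑ y ∈ Finset.univ.filter P, ((T 2 : LaurentPolynomial ℤ) * c (sw r k hk * y)) • b y
        + (∑ y ∈ Finset.univ.filter (fun y => ¬P y), c (sw r k hk * y) • b y
          + ∑ y ∈ Finset.univ.filter (fun y => ¬P y),
              (((T 2 : LaurentPolynomial ℤ) - 1) * c y) • b y) := by
    rw [Module.Basis.equivFun_symm_apply]
    rw [← Finset.sum_filter_add_sum_filter_not Finset.univ P]
    congr 1
    · apply Finset.sum_congr rfl
      intro y hy
      rw [Finset.mem_filter] at hy
      rw [if_pos hy.2]
    · rw [← Finset.sum_add_distrib]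
      apply Finset.sum_congr rfl
      intro y hy
      rw [Finset.mem_filter] at hy
      rw [if_neg hy.2, add_smul]
  rw [lhs1, ← hsplit, Finset.sum_congr rfl easc, Finset.sum_congr rfl edesc, rhs1,
    Finset.sum_add_distrib, rein1, rein2]
  abel

end Algebra
end Stmt10Aux
namespace Stmt10Aux
set_option linter.unusedSectionVars false
set_option linter.unusedVariables false
open Finset LaurentPolynomial

variable {r : ℕ}

section Algebra
variable {H : Type} [Ring H] [Algebra (LaurentPolynomial ℤ) H]
  (b : Module.Basis (Equiv.Perm (Fin r)) (LaurentPolynomial ℤ) H)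
  (hmul : ∀ (k : ℕ) (hk : k + 1 < r) (w : Equiv.Perm (Fin r)),
      (invLen (sw r k hk * w) = invLen w + 1 →
        b (sw r k hk) * b w = b (sw r k hk * w)) ∧
      (invLen (sw r k hk * w) ≠ invLen w + 1 →
        b (sw r k hk) * b w = (LaurentPolynomial.T 2 : LaurentPolynomial ℤ) • b (sw r k hk * w)
          + ((LaurentPolynomial.T 2 - 1 : LaurentPolynomial ℤ)) • b w))

include hmul

lemma eigen_q_iff (k : ℕ) (hk : k + 1 < r) (h : H) :
    b (sw r k hk) * h = (T 2 : LaurentPolynomial ℤ) • h ↔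
      ∀ y, invLen (sw r k hk * y) = invLen y + 1 →
        b.equivFun h (sw r k hk * y) = b.equivFun h y := by
  set c : Equiv.Perm (Fin r) → LaurentPolynomial ℤ := b.equivFun h with hc
  have hq : (T 2 : LaurentPolynomial ℤ) • h
      = b.equivFun.symm (fun y => (T 2 : LaurentPolynomial ℤ) * c y) := by
    have : (fun y => (T 2 : LaurentPolynomial ℤ) * c y) = (T 2 : LaurentPolynomial ℤ) • c := by
      funext y; simp [Pi.smul_apply, smul_eq_mul]
    rw [this, map_smul, hc, LinearEquiv.symm_apply_apply]
  rw [mul_bs b hmul k hk h, hq, (b.equivFun.symm.injective.eq_iff), funext_iff]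
  simp only [← hc]
  constructor
  · intro hF y hy
    have h2 := hF (sw r k hk * y)
    have hd : ¬(invLen (sw r k hk * (sw r k hk * y)) = invLen (sw r k hk * y) + 1) :=
      asc_flip hk y hy
    rw [if_neg hd, sw_mul_sw_mul] at h2
    linear_combination -h2
  · intro hy y
    by_cases hcase : invLen (sw r k hk * y) = invLen y + 1
    · rw [if_pos hcase, hy y hcase]
    · rw [if_neg hcase]
      have h2 := hy (sw r k hk * y) (desc_flip hk y hcase)
      rw [sw_mul_sw_mul] at h2
      linear_combination -h2

lemma eigen_neg_iff (k : ℕ) (hk : k + 1 < r) (h : H) :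
    b (sw r k hk) * h = -h ↔
      ∀ y, invLen (sw r k hk * y) = invLen y + 1 →
        (T 2 : LaurentPolynomial ℤ) * b.equivFun h (sw r k hk * y) = -(b.equivFun h y) := by
  set c : Equiv.Perm (Fin r) → LaurentPolynomial ℤ := b.equivFun h with hc
  have hq : -h = b.equivFun.symm (fun y => -(c y)) := by
    have : (fun y => -(c y)) = -c := rfl
    rw [this, map_neg, hc, LinearEquiv.symm_apply_apply]
  rw [mul_bs b hmul k hk h, hq, (b.equivFun.symm.injective.eq_iff), funext_iff]
  simp only [← hc]
  constructor
  · intro hF y hy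
    have h2 := hF y
    rw [if_pos hy] at h2
    exact h2
  · intro hy y
    by_cases hcase : invLen (sw r k hk * y) = invLen y + 1
    · rw [if_pos hcase]
      exact hy y hcase
    · rw [if_neg hcase]
      have h2 := hy (sw r k hk * y) (desc_flip hk y hcase)
      rw [sw_mul_sw_mul] at h2
      linear_combination h2

end Algebra
end Stmt10Aux
namespace Stmt10Aux
set_option linter.unusedSectionVars false
set_option linter.unusedVariables false
open Finset LaurentPolynomial

noncomputable def em (n : ℕ) : LaurentPolynomial ℤ :=
  (-1 : LaurentPolynomial ℤ) ^ n * LaurentPolynomial.T (-(2 * (n : ℤ)))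

lemma em_zero : em 0 = 1 := by simp [em]

lemma T_mul_em_succ (n : ℕ) : (T 2 : LaurentPolynomial ℤ) * em (n + 1) = - em n := by
  unfold em
  have h1 : (-(2 * ((n + 1 : ℕ) : ℤ))) = (-2) + (-(2 * (n : ℤ))) := by push_cast; ring
  rw [h1, T_add, pow_succ]
  have hT : (T 2 : LaurentPolynomial ℤ) * T (-2) = 1 := by
    rw [← T_add]; norm_num
  linear_combination (-((-1 : LaurentPolynomial ℤ) ^ n * T (-(2 * (n : ℤ))))) * hT

variable {r : ℕ}

section Algebra
variable {lam mu : List ℕ} (hr : lam.sum + mu.sum = r)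
  {H : Type} [Ring H] [Algebra (LaurentPolynomial ℤ) H]
  (b : Module.Basis (Equiv.Perm (Fin r)) (LaurentPolynomial ℤ) H)
  (hone : b 1 = 1)
  (hmul : ∀ (k : ℕ) (hk : k + 1 < r) (w : Equiv.Perm (Fin r)),
      (invLen (sw r k hk * w) = invLen w + 1 →
        b (sw r k hk) * b w = b (sw r k hk * w)) ∧
      (invLen (sw r k hk * w) ≠ invLen w + 1 →
        b (sw r k hk) * b w = (LaurentPolynomial.T 2 : LaurentPolynomial ℤ) • b (sw r k hk * w)
          + ((LaurentPolynomial.T 2 - 1 : LaurentPolynomial ℤ)) • b w))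

include hr hone hmul

lemma g_eq :
    xElt (padRight r lam) b * yElt (padLeft r mu) b
      = ∑ a ∈ Finset.univ.filter (fun a => a ∈ youngSubgroup r (lam ++ mu)),
          em (mlen lam.sum a) • b a := by
  classical
  unfold xElt yElt
  rw [Finset.sum_mul_sum]
  have step1 : ∀ u ∈ Finset.univ.filter (fun w => w ∈ youngSubgroup r (padRight r lam)),
      ∀ v ∈ Finset.univ.filter (fun w => w ∈ youngSubgroup r (padLeft r mu)),
      b u * (((-1 : LaurentPolynomial ℤ) ^ invLen v * T (-(2 * (invLen v : ℤ)))) • b v)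
        = em (mlen lam.sum (u * v)) • b (u * v) := by
    intro u hu v hv
    rw [Finset.mem_filter] at hu hv
    rw [mul_smul_comm]
    rw [bmul b hone hmul (invLen u) u v rfl (invLen_uv hr hu.2 hv.2)]
    rw [mlen_uv hr hu.2 hv.2]
    rfl
  rw [Finset.sum_congr rfl (fun u hu => Finset.sum_congr rfl (fun v hv => step1 u hu v hv))]
  rw [← Finset.sum_product']
  apply Finset.sum_nbij' (fun p : Equiv.Perm (Fin r) × Equiv.Perm (Fin r) => p.1 * p.2)
    (fun a => if ha : a ∈ youngSubgroup r (lam ++ mu)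
      then (uOf lam a (uOf_inj hr ha), vOf lam mu hr a ha) else (1, 1))
  · intro p hp
    rw [Finset.mem_product, Finset.mem_filter, Finset.mem_filter] at hp
    rw [Finset.mem_filter]
    exact ⟨Finset.mem_univ _, uv_mem_concat hr hp.1.2 hp.2.2⟩
  · intro a ha
    rw [Finset.mem_filter] at ha
    rw [dif_pos ha.2]
    rw [Finset.mem_product, Finset.mem_filter, Finset.mem_filter]
    exact ⟨⟨Finset.mem_univ _, uOf_mem hr ha.2⟩, ⟨Finset.mem_univ _, vOf_mem hr ha.2⟩⟩
  · intro p hp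
    rw [Finset.mem_product, Finset.mem_filter, Finset.mem_filter] at hp
    have hw : p.1 * p.2 ∈ youngSubgroup r (lam ++ mu) := uv_mem_concat hr hp.1.2 hp.2.2
    rw [dif_pos hw]
    have hu : uOf lam (p.1 * p.2) (uOf_inj hr hw) = p.1 := by
      apply Equiv.ext
      intro i
      rcases lt_or_ge (i : ℕ) lam.sum with hi | hi
      · rw [uOf_apply_lt hr hw hi, uv_apply_lt hr hp.1.2 hp.2.2 hi]
      · rw [uOf_apply_ge hr hw hi, lamRegion_fix hr hp.1.2 hi]
    have hv : vOf lam mu hr (p.1 * p.2) hw = p.2 := by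
      unfold vOf
      rw [hu, ← mul_assoc, inv_mul_cancel, one_mul]
    rw [hu, hv]
  · intro a ha
    rw [Finset.mem_filter] at ha
    rw [dif_pos ha.2]
    exact uOf_mul_vOf hr ha.2
  · intro p hp
    rfl

lemma g_equivFun :
    b.equivFun (xElt (padRight r lam) b * yElt (padLeft r mu) b)
      = fun a => if a ∈ youngSubgroup r (lam ++ mu) then em (mlen lam.sum a) else 0 := by
  classical
  rw [g_eq hr b hone hmul]
  funext y
  rw [map_sum]
  have : ∀ a, (b.equivFun (em (mlen lam.sum a) • b a)) y
      = em (mlen lam.sum a) * (if a = y then 1 else 0) := by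
    intro a
    rw [map_smul]
    by_cases hay : a = y
    · subst hay; simp [Module.Basis.equivFun_self]
    · simp [Module.Basis.equivFun_self, Finsupp.single_apply, hay]
  rw [Finset.sum_apply, Finset.sum_congr rfl (fun a _ => this a)]
  simp only [mul_ite, mul_one, mul_zero]
  rw [Finset.sum_ite_eq' (Finset.univ.filter (fun a => a ∈ youngSubgroup r (lam ++ mu))) y
    (fun a => em (mlen lam.sum a))]
  simp

end Algebra
end Stmt10Aux
namespace Stmt10Aux
set_option linter.unusedSectionVars false
set_option linter.unusedVariables false
open Finset LaurentPolynomial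

variable {r : ℕ}

lemma invP_one (P : Fin r × Fin r → Prop) : invP P (1 : Equiv.Perm (Fin r)) = 0 := by
  unfold invP
  rw [Finset.card_eq_zero]
  ext p
  simp only [Finset.mem_filter, Finset.mem_univ, true_and, Finset.notMem_empty, iff_false,
    not_and]
  intro _ h1 h2
  simp only [Equiv.Perm.coe_one, id_eq] at h2
  exact absurd h1 (not_lt.2 (le_of_lt h2))

lemma mlen_one (L : ℕ) : mlen L (1 : Equiv.Perm (Fin r)) = 0 := invP_one _

section Algebra
variable {lam mu : List ℕ} (hr : lam.sum + mu.sum = r)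
  {H : Type} [Ring H] [Algebra (LaurentPolynomial ℤ) H]
  (b : Module.Basis (Equiv.Perm (Fin r)) (LaurentPolynomial ℤ) H)
  (hone : b 1 = 1)
  (hmul : ∀ (k : ℕ) (hk : k + 1 < r) (w : Equiv.Perm (Fin r)),
      (invLen (sw r k hk * w) = invLen w + 1 →
        b (sw r k hk) * b w = b (sw r k hk * w)) ∧
      (invLen (sw r k hk * w) ≠ invLen w + 1 →
        b (sw r k hk) * b w = (LaurentPolynomial.T 2 : LaurentPolynomial ℤ) • b (sw r k hk * w)
          + ((LaurentPolynomial.T 2 - 1 : LaurentPolynomial ℤ)) • b w))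

include hr hone hmul

lemma g_eigen_q {k : ℕ} (hk : k + 1 < r) (hsb : sameBlock (padRight r lam) k) :
    b (sw r k hk) * (xElt (padRight r lam) b * yElt (padLeft r mu) b)
      = (T 2 : LaurentPolynomial ℤ) • (xElt (padRight r lam) b * yElt (padLeft r mu) b) := by
  obtain ⟨hks, hsb'⟩ := sameBlock_padRight_iff hr hk hsb
  rw [eigen_q_iff b hmul k hk]
  intro y hy
  rw [g_equivFun hr b hone hmul]
  simp only
  have hswW : sw r k hk ∈ youngSubgroup r (lam ++ mu) := sw_mem_young hk hsb'
  by_cases hyW : y ∈ youngSubgroup r (lam ++ mu)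
  · rw [if_pos (mul_mem hswW hyW), if_pos hyW, mlen_sw_lam hr hk hks hyW]
  · rw [if_neg, if_neg hyW]
    intro hc
    exact hyW (by simpa [sw_mul_sw_mul] using mul_mem hswW hc)

lemma g_eigen_neg {k : ℕ} (hk : k + 1 < r) (hsb : sameBlock (padLeft r mu) k) :
    b (sw r k hk) * (xElt (padRight r lam) b * yElt (padLeft r mu) b)
      = -(xElt (padRight r lam) b * yElt (padLeft r mu) b) := by
  obtain ⟨hks, hsb'⟩ := sameBlock_padLeft_iff hr hk hsb
  rw [eigen_neg_iff b hmul k hk]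
  intro y hy
  rw [g_equivFun hr b hone hmul]
  simp only
  have hswW : sw r k hk ∈ youngSubgroup r (lam ++ mu) := sw_mem_young hk hsb'
  by_cases hyW : y ∈ youngSubgroup r (lam ++ mu)
  · rw [if_pos (mul_mem hswW hyW), if_pos hyW]
    have hasc : y⁻¹ (Ak r k hk) < y⁻¹ (Bk r k hk) := (asc_iff hk y).1 hy
    rw [mlen_sw_mu_asc hr hk hks hyW hasc, T_mul_em_succ]
  · rw [if_neg, if_neg hyW]
    · simp
    · intro hc
      exact hyW (by simpa [sw_mul_sw_mul] using mul_mem hswW hc)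

end Algebra
end Stmt10Aux
namespace Stmt10Aux
set_option linter.unusedSectionVars false
set_option linter.unusedVariables false
open Finset LaurentPolynomial

variable {r : ℕ}

section Algebra
variable {lam mu : List ℕ} (hr : lam.sum + mu.sum = r)
  {H : Type} [Ring H] [Algebra (LaurentPolynomial ℤ) H]
  (b : Module.Basis (Equiv.Perm (Fin r)) (LaurentPolynomial ℤ) H)
  (hone : b 1 = 1)
  (hmul : ∀ (k : ℕ) (hk : k + 1 < r) (w : Equiv.Perm (Fin r)),
      (invLen (sw r k hk * w) = invLen w + 1 →
        b (sw r k hk) * b w = b (sw r k hk * w)) ∧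
      (invLen (sw r k hk * w) ≠ invLen w + 1 →
        b (sw r k hk) * b w = (LaurentPolynomial.T 2 : LaurentPolynomial ℤ) • b (sw r k hk * w)
          + ((LaurentPolynomial.T 2 - 1 : LaurentPolynomial ℤ)) • b w))

include hr hone hmul

lemma coeff_rec (h : H)
    (hlam : ∀ (k : ℕ) (hk : k + 1 < r), sameBlock (padRight r lam) k →
      b (sw r k hk) * h = (T 2 : LaurentPolynomial ℤ) • h)
    (hmu' : ∀ (k : ℕ) (hk : k + 1 < r), sameBlock (padLeft r mu) k →
      b (sw r k hk) * h = -h) :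
    ∀ n (a d : Equiv.Perm (Fin r)), invLen a = n → a ∈ youngSubgroup r (lam ++ mu) →
      Dmem r lam mu d →
      b.equivFun h (a * d) = em (mlen lam.sum a) * b.equivFun h d := by
  intro n
  induction n using Nat.strong_induction_on with
  | _ n ih =>
    intro a d hn ha hd
    rcases eq_or_ne a 1 with h1 | h1
    · subst h1
      rw [one_mul, mlen_one, em_zero, one_mul]
    · obtain ⟨k, hk, hsb, hdesc⟩ := exists_descent_young ha h1
      set a' := sw r k hk * a with ha'def
      have hlena : invLen a = invLen a' + 1 := invLen_swap_descent hk a hdesc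
      have ha'W : a' ∈ youngSubgroup r (lam ++ mu) :=
        mul_mem (sw_mem_young hk hsb) ha
      have hswa' : sw r k hk * a' = a := by rw [ha'def, sw_mul_sw_mul]
      have hih : b.equivFun h (a' * d) = em (mlen lam.sum a') * b.equivFun h d :=
        ih (invLen a') (by omega) a' d rfl ha'W hd
      -- ascent at a' * d
      have hadd1 : invLen (a * d) = invLen a + invLen d := invLen_D_add hd _ a rfl ha
      have hadd2 : invLen (a' * d) = invLen a' + invLen d := invLen_D_add hd _ a' rfl ha'W
      have hasc : invLen (sw r k hk * (a' * d)) = invLen (a' * d) + 1 := by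
        rw [← mul_assoc, hswa']
        omega
      have hswad : sw r k hk * (a' * d) = a * d := by rw [← mul_assoc, hswa']
      rcases sameBlock_concat_cases hr hk hsb with hcase | hcase
      · -- λ-type
        have heq := (eigen_q_iff b hmul k hk h).1 (hlam k hk hcase) (a' * d) hasc
        rw [hswad] at heq
        rw [heq, hih]
        congr 2
        obtain ⟨hks, _⟩ := sameBlock_padRight_iff hr hk hcase
        rw [← hswa', mlen_sw_lam hr hk hks ha'W]
      · -- μ-type
        have heq := (eigen_neg_iff b hmul k hk h).1 (hmu' k hk hcase) (a' * d) hasc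
        rw [hswad] at heq
        obtain ⟨hks, _⟩ := sameBlock_padLeft_iff hr hk hcase
        have hmm : mlen lam.sum a = mlen lam.sum a' + 1 :=
          mlen_sw_mu_desc hr hk hks ha hdesc
        have hTcancel : (T 2 : LaurentPolynomial ℤ) * b.equivFun h (a * d)
            = (T 2 : LaurentPolynomial ℤ) * (em (mlen lam.sum a) * b.equivFun h d) := by
          rw [heq, hih, hmm]
          have := T_mul_em_succ (mlen lam.sum a')
          linear_combination (-(b.equivFun h d)) * this
        exact (isUnit_T 2).mul_left_cancel hTcancel

lemma gbd_equivFun {d : Equiv.Perm (Fin r)} (hd : Dmem r lam mu d) (w : Equiv.Perm (Fin r)) :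
    b.equivFun (xElt (padRight r lam) b * yElt (padLeft r mu) b * b d) w
      = ∑ a ∈ Finset.univ.filter (fun a => a ∈ youngSubgroup r (lam ++ mu)),
          em (mlen lam.sum a) * (if a * d = w then 1 else 0) := by
  classical
  have hgbd : xElt (padRight r lam) b * yElt (padLeft r mu) b * b d
      = ∑ a ∈ Finset.univ.filter (fun a => a ∈ youngSubgroup r (lam ++ mu)),
          em (mlen lam.sum a) • b (a * d) := by
    rw [g_eq hr b hone hmul, Finset.sum_mul]
    apply Finset.sum_congr rfl
    intro a haf
    rw [Finset.mem_filter] at haf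
    rw [smul_mul_assoc, bmul b hone hmul (invLen a) a d rfl (invLen_D_add hd _ a rfl haf.2)]
  rw [hgbd, map_sum, Finset.sum_apply]
  apply Finset.sum_congr rfl
  intro a haf
  rw [map_smul]
  by_cases haw : a * d = w
  · rw [if_pos haw]
    simp [haw, Module.Basis.equivFun_self]
  · rw [if_neg haw]
    simp [Module.Basis.equivFun_self, Finsupp.single_apply, haw]

end Algebra
end Stmt10Aux

open Finset LaurentPolynomial Stmt10Aux

/-- In the Hecke algebra `H` of `S_r` over `ℤ[v,v⁻¹]` (with `q = v²`, standard basis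
`{T_w}` given by `b` and the defining Hecke relations), for a pair of compositions
`λ|μ` of `r`: the set of `h ∈ H` with `T_s h = q h` for all simple `s ∈ S_{λ*}` and
`T_t h = -h` for all simple `t ∈ S_{*μ}` equals the free module `x_λ y_μ H` with basis
`{x_λ y_μ T_d : d ∈ D_{λ|μ}}`, where `D_{λ|μ}` is the set of minimal right coset
representatives of `S_{λ|μ} = S_{λ*} S_{*μ}`. -/
theorem stmt10 (r : ℕ) (lam mu : List ℕ) (hr : lam.sum + mu.sum = r)
    (H : Type) [Ring H] [Algebra (LaurentPolynomial ℤ) H]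
    (b : Module.Basis (Equiv.Perm (Fin r)) (LaurentPolynomial ℤ) H)
    (hone : b 1 = 1)
    (hmul : ∀ (k : ℕ) (hk : k + 1 < r) (w : Equiv.Perm (Fin r)),
      (invLen (sw r k hk * w) = invLen w + 1 →
        b (sw r k hk) * b w = b (sw r k hk * w)) ∧
      (invLen (sw r k hk * w) ≠ invLen w + 1 →
        b (sw r k hk) * b w = (LaurentPolynomial.T 2 : LaurentPolynomial ℤ) • b (sw r k hk * w)
          + ((LaurentPolynomial.T 2 - 1 : LaurentPolynomial ℤ)) • b w)) :
    {h : H |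
        (∀ (k : ℕ) (hk : k + 1 < r), sameBlock (padRight r lam) k →
          b (sw r k hk) * h = (LaurentPolynomial.T 2 : LaurentPolynomial ℤ) • h) ∧
        (∀ (k : ℕ) (hk : k + 1 < r), sameBlock (padLeft r mu) k →
          b (sw r k hk) * h = -h)}
      = ↑(Submodule.span (LaurentPolynomial ℤ)
          (Set.range fun d : {d : Equiv.Perm (Fin r) //
              ∀ a ∈ youngSubgroup r (lam ++ mu), invLen (d : Equiv.Perm (Fin r)) ≤ invLen (a * d)} =>
            xElt (padRight r lam) b * yElt (padLeft r mu) b * b (d : Equiv.Perm (Fin r))))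
    ∧ LinearIndependent (LaurentPolynomial ℤ)
        (fun d : {d : Equiv.Perm (Fin r) //
            ∀ a ∈ youngSubgroup r (lam ++ mu), invLen (d : Equiv.Perm (Fin r)) ≤ invLen (a * d)} =>
          xElt (padRight r lam) b * yElt (padLeft r mu) b * b (d : Equiv.Perm (Fin r))) := by
  classical
  set g : H := xElt (padRight r lam) b * yElt (padLeft r mu) b with hg
  have hFW : ∀ a : Equiv.Perm (Fin r), a ∈ Finset.univ.filter
      (fun a => a ∈ youngSubgroup r (lam ++ mu)) ↔ a ∈ youngSubgroup r (lam ++ mu) := by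
    intro a; simp
  constructor
  · apply Set.Subset.antisymm
    · -- eigen set ⊆ span
      intro h hh
      obtain ⟨hlam, hmu'⟩ := hh
      have hrec := coeff_rec hr b hone hmul h hlam hmu'
      set FD : Finset (Equiv.Perm (Fin r)) :=
        Finset.univ.filter (fun d => Dmem r lam mu d) with hFD
      have hexp : h = ∑ d ∈ FD, b.equivFun h d • (g * b d) := by
        apply b.equivFun.injective
        funext w
        rw [map_sum, Finset.sum_apply]
        obtain ⟨a₀, d₀, ha₀, hd₀, hw⟩ := exists_decomp (invLen w) w le_rfl
        have hterm : ∀ d ∈ FD, (b.equivFun (b.equivFun h d • (g * b d))) w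
            = b.equivFun h d * (∑ a ∈ Finset.univ.filter (fun a => a ∈ youngSubgroup r (lam ++ mu)),
                em (mlen lam.sum a) * (if a * d = w then 1 else 0)) := by
          intro d hd
          rw [Finset.mem_filter] at hd
          rw [map_smul, Pi.smul_apply, smul_eq_mul, hg]
          rw [gbd_equivFun hr b hone hmul hd.2 w]
        rw [Finset.sum_congr rfl hterm]
        have hS : ∀ d ∈ FD, d ≠ d₀ →
            b.equivFun h d * (∑ a ∈ Finset.univ.filter (fun a => a ∈ youngSubgroup r (lam ++ mu)),
              em (mlen lam.sum a) * (if a * d = w then 1 else 0)) = 0 := by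
          intro d hd hne
          rw [Finset.mem_filter] at hd
          have : (∑ a ∈ Finset.univ.filter (fun a => a ∈ youngSubgroup r (lam ++ mu)),
              em (mlen lam.sum a) * (if a * d = w then 1 else 0)) = 0 := by
            apply Finset.sum_eq_zero
            intro a haf
            rw [Finset.mem_filter] at haf
            rw [if_neg, mul_zero]
            intro hadw
            exact hne (decomp_unique haf.2 ha₀ hd.2 hd₀ (by rw [hadw, hw])).2
          rw [this, mul_zero]
        have hd₀FD : d₀ ∈ FD := Finset.mem_filter.2 ⟨Finset.mem_univ _, hd₀⟩
        rw [Finset.sum_eq_single_of_mem d₀ hd₀FD hS]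
        have hS0 : (∑ a ∈ Finset.univ.filter (fun a => a ∈ youngSubgroup r (lam ++ mu)),
            em (mlen lam.sum a) * (if a * d₀ = w then 1 else 0)) = em (mlen lam.sum a₀) := by
          rw [Finset.sum_eq_single_of_mem a₀ (Finset.mem_filter.2 ⟨Finset.mem_univ _, ha₀⟩)]
          · rw [if_pos hw.symm, mul_one]
          · intro a haf hne
            rw [Finset.mem_filter] at haf
            rw [if_neg, mul_zero]
            intro hadw
            exact hne (decomp_unique haf.2 ha₀ hd₀ hd₀ (by rw [hadw, hw])).1
        rw [hS0, hw]
        have h2 : b.equivFun h (a₀ * d₀)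
            = Stmt10Aux.em (mlen lam.sum a₀) * b.equivFun h d₀ :=
          hrec (invLen a₀) a₀ d₀ rfl ha₀ hd₀
        rw [h2]
        ring
      rw [hexp]
      apply SetLike.mem_coe.2
      apply Submodule.sum_mem
      intro d hd
      apply Submodule.smul_mem
      apply Submodule.subset_span
      exact ⟨⟨d, (Finset.mem_filter.1 hd).2⟩, rfl⟩
    · -- span ⊆ eigen set
      intro h hh
      have hq : ∀ (k : ℕ) (hk : k + 1 < r), sameBlock (padRight r lam) k →
          b (sw r k hk) * g = (T 2 : LaurentPolynomial ℤ) • g := by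
        intro k hk hsb
        rw [hg]
        exact g_eigen_q hr b hone hmul hk hsb
      have hn : ∀ (k : ℕ) (hk : k + 1 < r), sameBlock (padLeft r mu) k →
          b (sw r k hk) * g = -g := by
        intro k hk hsb
        rw [hg]
        exact g_eigen_neg hr b hone hmul hk hsb
      have hh' : h ∈ Submodule.span (LaurentPolynomial ℤ) _ := SetLike.mem_coe.1 hh
      clear hh
      induction hh' using Submodule.span_induction with
      | mem x hx =>
        obtain ⟨d, rfl⟩ := hx
        constructor
        · intro k hk hsb
          show b (sw r k hk) * (g * b (d : Equiv.Perm (Fin r)))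
            = (T 2 : LaurentPolynomial ℤ) • (g * b (d : Equiv.Perm (Fin r)))
          rw [← mul_assoc, hq k hk hsb, smul_mul_assoc]
        · intro k hk hsb
          show b (sw r k hk) * (g * b (d : Equiv.Perm (Fin r)))
            = -(g * b (d : Equiv.Perm (Fin r)))
          rw [← mul_assoc, hn k hk hsb, neg_mul]
      | zero =>
        constructor <;> intro k hk hsb <;> simp
      | add x y hx hy ihx ihy =>
        obtain ⟨ih1, ih2⟩ := ihx
        obtain ⟨ih3, ih4⟩ := ihy
        constructor
        · intro k hk hsb
          rw [mul_add, ih1 k hk hsb, ih3 k hk hsb, smul_add]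
        · intro k hk hsb
          rw [mul_add, ih2 k hk hsb, ih4 k hk hsb, neg_add]
      | smul t x hx ihx =>
        obtain ⟨ih1, ih2⟩ := ihx
        constructor
        · intro k hk hsb
          rw [mul_smul_comm, ih1 k hk hsb, smul_comm]
        · intro k hk hsb
          rw [mul_smul_comm, ih2 k hk hsb, smul_neg]
  · -- linear independence
    rw [linearIndependent_iff']
    intro s γ hsum i hi
    have happ := congrArg (fun z => b.equivFun z (i : Equiv.Perm (Fin r))) hsum
    simp only [map_sum, Finset.sum_apply, map_smul, Pi.smul_apply, smul_eq_mul, map_zero,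
      Pi.zero_apply] at happ
    have hterm : ∀ j ∈ s, γ j * (b.equivFun (g * b (j : Equiv.Perm (Fin r))))
        (i : Equiv.Perm (Fin r)) = if j = i then γ j else 0 := by
      intro j hj
      have hdj : Dmem r lam mu (j : Equiv.Perm (Fin r)) := j.2
      have hdi : Dmem r lam mu (i : Equiv.Perm (Fin r)) := i.2
      rw [hg, gbd_equivFun hr b hone hmul hdj]
      by_cases hji : j = i
      · subst hji
        rw [if_pos rfl]
        have : (∑ a ∈ Finset.univ.filter (fun a => a ∈ youngSubgroup r (lam ++ mu)),
            em (mlen lam.sum a) * (if a * (j : Equiv.Perm (Fin r)) = (j : Equiv.Perm (Fin r))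
              then 1 else 0)) = 1 := by
          rw [Finset.sum_eq_single_of_mem 1 (Finset.mem_filter.2 ⟨Finset.mem_univ _, one_mem _⟩)]
          · rw [if_pos (one_mul _), mul_one, mlen_one, em_zero]
          · intro a haf hne
            rw [if_neg, mul_zero]
            intro hadw
            apply hne
            have := mul_right_cancel (hadw.trans (one_mul (j : Equiv.Perm (Fin r))).symm)
            exact this
        rw [this, mul_one]
      · rw [if_neg hji]
        have : (∑ a ∈ Finset.univ.filter (fun a => a ∈ youngSubgroup r (lam ++ mu)),
            em (mlen lam.sum a) * (if a * (j : Equiv.Perm (Fin r)) = (i : Equiv.Perm (Fin r))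
              then 1 else 0)) = 0 := by
          apply Finset.sum_eq_zero
          intro a haf
          rw [Finset.mem_filter] at haf
          rw [if_neg, mul_zero]
          intro hadw
          apply hji
          apply Subtype.ext
          exact (decomp_unique haf.2 (one_mem _) hdj hdi
            (by rw [hadw, one_mul])).2
        rw [this, mul_zero]
    rw [Finset.sum_congr rfl hterm] at happ
    rw [Finset.sum_ite_eq' s i γ] at happ
    rw [if_pos hi] at happ
    exact happ
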